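/- arXiv:1703.05505 — 10 statements merged into one kernel-verified Lean document; each statement's English description precedes it below -/
import Mathlib

section
/- Fix an integer k ≥ 1. There exist N₀ ∈ ℕ and C > 0 such that for all N ≥ N₀ the matrix kΓ − NQ is invertible and, writing F_{N,k} := (kΓ − NQ)^{-1} and E := (I − (1/γ⋆)·𝟏π^TΓ)·D·(I − (1/γ⋆)·γπ^T), one has ‖F_{N,k} − (1/(kγ⋆))·𝟏π^T − (1/N)·E‖ ≤ C/N². -/
/-!
With `P := (1 / (k γ⋆)) 𝟏πᵀ` and `S_N := P + E / N` one checks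
`(kΓ - NQ) S_N = I + (k / N) ΓE`: the identities `Q𝟏 = 0` and `QD = 𝟏πᵀ - I` give
`QE = (1 / γ⋆) γπᵀ - I`, which cancels the leading term `kΓP`. Hence `kΓ - NQ` is invertible
as soon as `I + (k / N) ΓE` is, and since `𝟏πᵀΓE = 0` kills `PΓE`,
`F_{N,k} - S_N = -(k / N²) EΓE (I + (k / N) ΓE)⁻¹`.
The last factor stays bounded as `N → ∞` by continuity of the matrix inverse at `I`.
-/

open Matrix Filter Topology

attribute [local instance] Matrix.normedAddCommGroup Matrix.normedSpace

variable {n : Type*} [Fintype n] [DecidableEq n]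

namespace Matrix

theorem isUnit_and_inv_sub_eq_of_mul_eq_one_add_smul {α : Type*} [CommRing α]
    {M S T : Matrix n n α} {x : α} (hMS : M * S = 1 + x • T) (hU : IsUnit (1 + x • T)) :
    IsUnit M ∧ M⁻¹ - S = -x • (S * T * (1 + x • T)⁻¹) := by
  have hUU : (1 + x • T) * (1 + x • T)⁻¹ = 1 := mul_nonsing_inv _ ((isUnit_iff_isUnit_det _).mp hU)
  have hright : M * (S * (1 + x • T)⁻¹) = 1 := by rw [← Matrix.mul_assoc, hMS, hUU]
  refine ⟨(isUnit_iff_isUnit_det M).mpr (isUnit_det_of_right_inverse hright), ?_⟩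
  calc M⁻¹ - S = S * (1 + x • T)⁻¹ - S * (1 + x • T) * (1 + x • T)⁻¹ := by
        rw [inv_eq_right_inv hright, Matrix.mul_assoc, hUU, Matrix.mul_one]
    _ = -x • (S * T * (1 + x • T)⁻¹) := by
        rw [← Matrix.sub_mul, ← Matrix.mul_one S]
        simp [Matrix.mul_add, Matrix.mul_assoc]

theorem eventually_isUnit_one_add_smul_and_norm_mul_inv_lt (B T : Matrix n n ℝ) :
    ∀ᶠ x in 𝓝 (0 : ℝ), IsUnit (1 + x • T) ∧ ‖B * (1 + x • T)⁻¹‖ < ‖B‖ + 1 := by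
  have hcont : Continuous fun x : ℝ => 1 + x • T := by fun_prop
  have hunit : ∀ᶠ x in 𝓝 (0 : ℝ), IsUnit (1 + x • T) := by
    have := (hcont.matrix_det.continuousAt (x := 0)).eventually_ne (y := 0) (by simp)
    filter_upwards [this] with x hx
    exact (isUnit_iff_isUnit_det _).mpr hx.isUnit
  have hinv : Tendsto (fun x : ℝ => B * (1 + x • T)⁻¹) (𝓝 0) (𝓝 B) := by
    have h1 : ContinuousAt Inv.inv (1 : Matrix n n ℝ) :=
      continuousAt_matrix_inv _ (by simp)
    have h2 := (h1.tendsto.comp (hcont.tendsto' 0 1 (by simp))).const_mul B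
    simpa using h2
  exact hunit.and (hinv.norm.eventually (gt_mem_nhds (lt_add_one ‖B‖)))

end Matrix

noncomputable section

variable {K : Type*} [Field K]

def deviationMatrix (Q : Matrix n n K) (π : n → K) : Matrix n n K :=
  (vecMulVec 1 π - Q)⁻¹ - vecMulVec 1 π

def firstOrderCorrection (Q : Matrix n n K) (π γ : n → K) : Matrix n n K :=
  (1 - (1 / (π ⬝ᵥ γ)) • (vecMulVec 1 π * diagonal γ)) * deviationMatrix Q π *
    (1 - (1 / (π ⬝ᵥ γ)) • vecMulVec γ π)

variable {Q : Matrix n n K} {π : n → K}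

theorem mul_deviationMatrix (hQ : Q *ᵥ 1 = 0) (hπQ : π ᵥ* Q = 0) (hπ : π ⬝ᵥ 1 = 1)
    (hA : IsUnit (vecMulVec 1 π - Q)) :
    Q * deviationMatrix Q π = vecMulVec 1 π - 1 := by
  have hAA : (vecMulVec 1 π - Q) * (vecMulVec 1 π - Q)⁻¹ = 1 :=
    mul_nonsing_inv _ ((isUnit_iff_isUnit_det _).mp hA)
  have hπAinv : π ᵥ* (vecMulVec 1 π - Q)⁻¹ = π := by
    have hπA : π ᵥ* (vecMulVec 1 π - Q) = π := by
      rw [vecMul_sub, vecMul_vecMulVec, hπ, one_smul, hπQ, sub_zero]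
    calc π ᵥ* (vecMulVec 1 π - Q)⁻¹ = π ᵥ* (vecMulVec 1 π - Q) ᵥ* (vecMulVec 1 π - Q)⁻¹ := by
          rw [hπA]
      _ = π := by rw [vecMul_vecMul, hAA, vecMul_one]
  have hJA : (vecMulVec 1 π : Matrix n n K) * (vecMulVec 1 π - Q)⁻¹ = vecMulVec 1 π := by
    rw [vecMulVec_mul, hπAinv]
  have hQJ : Q * vecMulVec 1 π = 0 := by rw [mul_vecMulVec, hQ, zero_vecMulVec]
  rw [deviationMatrix, Matrix.mul_sub, hQJ, sub_zero, ← hAA, Matrix.sub_mul, hJA]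
  abel

theorem vecMulVec_mul_diagonal_mul_firstOrderCorrection (γ : n → K) (hg : π ⬝ᵥ γ ≠ 0) :
    (vecMulVec 1 π : Matrix n n K) * diagonal γ * firstOrderCorrection Q π γ = 0 := by
  have hJΓ : (vecMulVec 1 π : Matrix n n K) * diagonal γ = vecMulVec 1 (π * γ) := by
    ext i j; simp [vecMulVec_apply]
  have hJΓL : vecMulVec (1 : n → K) π * diagonal γ *
      (1 - (1 / (π ⬝ᵥ γ)) • (vecMulVec 1 π * diagonal γ)) = 0 := by
    rw [hJΓ, Matrix.mul_sub, Matrix.mul_one, Matrix.mul_smul, vecMulVec_mul_vecMulVec,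
      dotProduct_one, vecMulVec_smul, smul_smul, show ∑ i, (π * γ) i = π ⬝ᵥ γ from rfl,
      one_div_mul_cancel hg, one_smul, sub_self]
  rw [firstOrderCorrection, ← Matrix.mul_assoc, ← Matrix.mul_assoc, hJΓL, Matrix.zero_mul,
    Matrix.zero_mul]

theorem mul_firstOrderCorrection (γ : n → K) (hQ : Q *ᵥ 1 = 0) (hπQ : π ᵥ* Q = 0)
    (hπ : π ⬝ᵥ 1 = 1) (hA : IsUnit (vecMulVec 1 π - Q)) (hg : π ⬝ᵥ γ ≠ 0) :
    Q * firstOrderCorrection Q π γ = (1 / (π ⬝ᵥ γ)) • vecMulVec γ π - 1 := by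
  have hQJ : Q * vecMulVec 1 π = 0 := by rw [mul_vecMulVec, hQ, zero_vecMulVec]
  have hQL : Q * (1 - (1 / (π ⬝ᵥ γ)) • (vecMulVec 1 π * diagonal γ)) = Q := by
    rw [Matrix.mul_sub, Matrix.mul_one, Matrix.mul_smul, ← Matrix.mul_assoc, hQJ,
      Matrix.zero_mul, smul_zero, sub_zero]
  have hJV : (vecMulVec 1 π : Matrix n n K) * vecMulVec γ π = (π ⬝ᵥ γ) • vecMulVec 1 π := by
    rw [vecMulVec_mul_vecMulVec, vecMulVec_smul]
  rw [firstOrderCorrection, ← Matrix.mul_assoc, ← Matrix.mul_assoc, hQL,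
    mul_deviationMatrix hQ hπQ hπ hA, Matrix.sub_mul, Matrix.mul_sub, Matrix.mul_smul, hJV,
    smul_smul, one_div_mul_cancel hg, one_smul, Matrix.mul_one, Matrix.one_mul]
  abel

theorem mul_projector_add_firstOrderCorrection (γ : n → K) (hQ : Q *ᵥ 1 = 0) (hπQ : π ᵥ* Q = 0)
    (hπ : π ⬝ᵥ 1 = 1) (hA : IsUnit (vecMulVec 1 π - Q)) (hg : π ⬝ᵥ γ ≠ 0) {k N : K}
    (hk : k ≠ 0) (hN : N ≠ 0) :
    (k • diagonal γ - N • Q) *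
        ((1 / (k * (π ⬝ᵥ γ))) • vecMulVec 1 π + (1 / N) • firstOrderCorrection Q π γ) =
      1 + (k / N) • (diagonal γ * firstOrderCorrection Q π γ) := by
  have hΓJ : diagonal γ * vecMulVec 1 π = vecMulVec γ π := by
    ext i j; simp [vecMulVec_apply]
  have hQJ : Q * vecMulVec 1 π = 0 := by rw [mul_vecMulVec, hQ, zero_vecMulVec]
  simp only [Matrix.sub_mul, Matrix.mul_add, Matrix.smul_mul, Matrix.mul_smul, smul_smul, hΓJ, hQJ,
    mul_firstOrderCorrection γ hQ hπQ hπ hA hg, smul_zero, smul_sub]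
  rw [show 1 / (k * (π ⬝ᵥ γ)) * k = 1 / (π ⬝ᵥ γ) by field_simp, one_div_mul_eq_div,
    show 1 / N * (N * (1 / (π ⬝ᵥ γ))) = 1 / (π ⬝ᵥ γ) by field_simp, one_div_mul_cancel hN]
  module

theorem isUnit_and_inv_sub_firstOrderExpansion (γ : n → K) (hQ : Q *ᵥ 1 = 0)
    (hπQ : π ᵥ* Q = 0) (hπ : π ⬝ᵥ 1 = 1) (hA : IsUnit (vecMulVec 1 π - Q)) (hg : π ⬝ᵥ γ ≠ 0)
    {k N : K} (hk : k ≠ 0) (hN : N ≠ 0)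
    (hU : IsUnit (1 + (k / N) • (diagonal γ * firstOrderCorrection Q π γ))) :
    IsUnit (k • diagonal γ - N • Q) ∧
      (k • diagonal γ - N • Q)⁻¹ - (1 / (k * (π ⬝ᵥ γ))) • vecMulVec 1 π -
          (1 / N) • firstOrderCorrection Q π γ =
        -(k / N ^ 2) • (firstOrderCorrection Q π γ * (diagonal γ * firstOrderCorrection Q π γ) *
          (1 + (k / N) • (diagonal γ * firstOrderCorrection Q π γ))⁻¹) := by
  obtain ⟨hM, hexp⟩ := isUnit_and_inv_sub_eq_of_mul_eq_one_add_smul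
    (mul_projector_add_firstOrderCorrection γ hQ hπQ hπ hA hg hk hN) hU
  refine ⟨hM, ?_⟩
  rw [sub_sub, hexp, Matrix.add_mul, Matrix.smul_mul, ← Matrix.mul_assoc,
    vecMulVec_mul_diagonal_mul_firstOrderCorrection γ hg]
  simp only [smul_zero, zero_add, Matrix.smul_mul, smul_smul]
  congr 1
  ring

end

theorem exists_eventually_norm_inv_sub_firstOrderExpansion_le {Q : Matrix n n ℝ} {π : n → ℝ}
    (γ : n → ℝ) (hQ : Q *ᵥ 1 = 0) (hπQ : π ᵥ* Q = 0) (hπ : π ⬝ᵥ 1 = 1)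
    (hA : IsUnit (vecMulVec 1 π - Q)) (hg : π ⬝ᵥ γ ≠ 0) {k : ℝ} (hk : k ≠ 0) :
    ∃ C : ℝ, 0 < C ∧ ∀ᶠ N : ℕ in atTop,
      IsUnit (k • diagonal γ - (N : ℝ) • Q) ∧
      ‖(k • diagonal γ - (N : ℝ) • Q)⁻¹ - (1 / (k * (π ⬝ᵥ γ))) • vecMulVec 1 π -
          (1 / (N : ℝ)) • firstOrderCorrection Q π γ‖ ≤ C / (N : ℝ) ^ 2 := by
  set E := firstOrderCorrection Q π γ
  set T := diagonal γ * E
  refine ⟨|k| * (‖E * T‖ + 1), by positivity, ?_⟩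
  filter_upwards [(tendsto_const_div_atTop_nhds_zero_nat k).eventually
      (eventually_isUnit_one_add_smul_and_norm_mul_inv_lt (E * T) T), eventually_gt_atTop 0]
    with N ⟨hU, hbound⟩ hN
  obtain ⟨hM, hexp⟩ :=
    isUnit_and_inv_sub_firstOrderExpansion γ hQ hπQ hπ hA hg hk (Nat.cast_ne_zero.2 hN.ne') hU
  refine ⟨hM, ?_⟩
  calc ‖_‖ = |k| / (N : ℝ) ^ 2 * ‖E * T * (1 + (k / N) • T)⁻¹‖ := by
        rw [hexp, norm_smul, norm_neg, Real.norm_eq_abs, abs_div,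
          abs_of_pos (by positivity : (0 : ℝ) < (N : ℝ) ^ 2)]
    _ ≤ |k| / (N : ℝ) ^ 2 * (‖E * T‖ + 1) := by gcongr
    _ = |k| * (‖E * T‖ + 1) / (N : ℝ) ^ 2 := by ring

theorem stmt_0_general
    (d : ℕ)
    (Q : Matrix (Fin d) (Fin d) ℝ) (π lam mu : Fin d → ℝ)
    (hQrow : ∀ i, ∑ j, Q i j = 0)
    (hπpos : ∀ i, 0 < π i) (hπsum : ∑ i, π i = 1)
    (hπQ : Q.vecMul π = 0)
    (hγpos : ∀ i, 0 < lam i + mu i)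
    (hinv : IsUnit (vecMulVec 1 π - Q))
    (k : ℕ) (hk : 1 ≤ k) :
    ∃ N₀ : ℕ, ∃ C : ℝ, 0 < C ∧ ∀ N : ℕ, N₀ ≤ N →
      IsUnit ((k : ℝ) • Matrix.diagonal (fun i => lam i + mu i) - (N : ℝ) • Q) ∧
      ‖((k : ℝ) • Matrix.diagonal (fun i => lam i + mu i) - (N : ℝ) • Q)⁻¹
          - (1 / ((k : ℝ) * (π ⬝ᵥ (lam + mu)))) • vecMulVec 1 π
          - (1 / (N : ℝ)) •
              ((1 - (1 / (π ⬝ᵥ (lam + mu))) •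
                    (vecMulVec 1 π * Matrix.diagonal (fun i => lam i + mu i))) *
                ((vecMulVec 1 π - Q)⁻¹ - vecMulVec 1 π) *
                (1 - (1 / (π ⬝ᵥ (lam + mu))) • vecMulVec (lam + mu) π))‖
        ≤ C / (N : ℝ) ^ 2 := by
  have hQ : Q *ᵥ 1 = 0 := funext fun i => by simpa [mulVec, dotProduct] using hQrow i
  have hπ : π ⬝ᵥ 1 = 1 := by simpa [dotProduct] using hπsum
  have hg : 0 < π ⬝ᵥ (lam + mu) :=
    Finset.sum_pos (fun i _ => mul_pos (hπpos i) (hγpos i))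
      (Finset.nonempty_of_sum_ne_zero (hπsum ▸ one_ne_zero))
  obtain ⟨C, hC, hev⟩ := exists_eventually_norm_inv_sub_firstOrderExpansion_le (lam + mu) hQ hπQ
    hπ hinv hg.ne' (k := k) (Nat.cast_pos.2 hk).ne'
  obtain ⟨N₀, hN₀⟩ := eventually_atTop.1 hev
  exact ⟨N₀, C, hC, hN₀⟩

/-- Fix an integer `k ≥ 1`. There exist `N₀ ∈ ℕ` and `C > 0` such that for all
`N ≥ N₀` the matrix `kΓ − NQ` is invertible and, with `F_{N,k} := (kΓ − NQ)⁻¹` and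
`E := (I − (1/γ⋆)·𝟏πᵀΓ)·D·(I − (1/γ⋆)·γπᵀ)`, one has
`‖F_{N,k} − (1/(kγ⋆))·𝟏πᵀ − (1/N)·E‖ ≤ C/N²`. -/
theorem stmt_0
    (d : ℕ) (hd : 2 ≤ d)
    (Q : Matrix (Fin d) (Fin d) ℝ) (π lam mu : Fin d → ℝ)
    (hQoff : ∀ i j, i ≠ j → 0 ≤ Q i j)
    (hQrow : ∀ i, ∑ j, Q i j = 0)
    (hrker : ∀ v : Fin d → ℝ, Q.mulVec v = 0 ↔ ∃ c : ℝ, v = c • (1 : Fin d → ℝ))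
    (hlker : ∀ w : Fin d → ℝ, Q.vecMul w = 0 ↔ ∃ c : ℝ, w = c • π)
    (hπpos : ∀ i, 0 < π i) (hπsum : ∑ i, π i = 1)
    (hπQ : Q.vecMul π = 0)
    (hlam : ∀ i, 0 ≤ lam i) (hmu : ∀ i, 0 ≤ mu i)
    (hγpos : ∀ i, 0 < lam i + mu i)
    (hinv : IsUnit (vecMulVec 1 π - Q))
    (k : ℕ) (hk : 1 ≤ k) :
    ∃ N₀ : ℕ, ∃ C : ℝ, 0 < C ∧ ∀ N : ℕ, N₀ ≤ N →
      IsUnit ((k : ℝ) • Matrix.diagonal (fun i => lam i + mu i) - (N : ℝ) • Q) ∧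
      ‖((k : ℝ) • Matrix.diagonal (fun i => lam i + mu i) - (N : ℝ) • Q)⁻¹
          - (1 / ((k : ℝ) * (π ⬝ᵥ (lam + mu)))) • vecMulVec 1 π
          - (1 / (N : ℝ)) •
              ((1 - (1 / (π ⬝ᵥ (lam + mu))) •
                    (vecMulVec 1 π * Matrix.diagonal (fun i => lam i + mu i))) *
                ((vecMulVec 1 π - Q)⁻¹ - vecMulVec 1 π) *
                (1 - (1 / (π ⬝ᵥ (lam + mu))) • vecMulVec (lam + mu) π))‖
        ≤ C / (N : ℝ) ^ 2 :=
  stmt_0_general d Q π lam mu hQrow hπpos hπsum hπQ hγpos hinv k hk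
end

section
/- Let Q = AB where A is a real d×(d−1) matrix of full column rank and B is a real (d−1)×d matrix of full row rank. Then the matrix BΓ^{-1}A is invertible and Γ^{-1} − Γ^{-1}A(BΓ^{-1}A)^{-1}BΓ^{-1} = (1/γ⋆)·𝟏π^T. -/
open Matrix

lemma aux_mulVec_inj {m n : ℕ} (A : Matrix (Fin m) (Fin n) ℝ) (h : A.rank = n) :
    Function.Injective A.mulVec := by
  rw [← Matrix.coe_mulVecLin, ← LinearMap.ker_eq_bot]
  have h2 := LinearMap.finrank_range_add_finrank_ker A.mulVecLin
  rw [Module.finrank_fintype_fun_eq_card, Fintype.card_fin] at h2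
  have h3 : A.rank = Module.finrank ℝ (LinearMap.range A.mulVecLin) := rfl
  exact Submodule.finrank_eq_zero.mp (by omega)

/-- Let `Q = AB` with `A` of full column rank and `B` of full row rank. Then
`BΓ⁻¹A` is invertible and `Γ⁻¹ − Γ⁻¹A(BΓ⁻¹A)⁻¹BΓ⁻¹ = (1/γ⋆)·𝟏πᵀ`.
(The ambient dimension `d ≥ 2` is encoded as `e + 1` with `e ≥ 1`.) -/
theorem stmt_2
    (e : ℕ) (he : 1 ≤ e)
    (Q : Matrix (Fin (e + 1)) (Fin (e + 1)) ℝ) (π γ : Fin (e + 1) → ℝ)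
    (hQrank : Q.rank = e)
    (hrker : ∀ v : Fin (e + 1) → ℝ, Q.mulVec v = 0 ↔ ∃ c : ℝ, v = c • (1 : Fin (e + 1) → ℝ))
    (hlker : ∀ w : Fin (e + 1) → ℝ, Q.vecMul w = 0 ↔ ∃ c : ℝ, w = c • π)
    (hπsum : π ⬝ᵥ 1 = 1)
    (hγpos : ∀ i, 0 < γ i) (hγstar : π ⬝ᵥ γ ≠ 0)
    (A : Matrix (Fin (e + 1)) (Fin e) ℝ) (B : Matrix (Fin e) (Fin (e + 1)) ℝ)
    (hA : A.rank = e) (hB : B.rank = e)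
    (hQ : Q = A * B) :
    IsUnit (B * (Matrix.diagonal γ)⁻¹ * A) ∧
      (Matrix.diagonal γ)⁻¹ -
          (Matrix.diagonal γ)⁻¹ * A * (B * (Matrix.diagonal γ)⁻¹ * A)⁻¹ * B *
            (Matrix.diagonal γ)⁻¹
        = (1 / (π ⬝ᵥ γ)) • vecMulVec 1 π := by
  have hγne : ∀ i, γ i ≠ 0 := fun i => (hγpos i).ne'
  have hD : (Matrix.diagonal γ)⁻¹ = Matrix.diagonal γ⁻¹ := by
    apply Matrix.inv_eq_right_inv
    rw [Matrix.diagonal_mul_diagonal]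
    ext i j
    rcases eq_or_ne i j with h | h
    · subst h; simp [mul_inv_cancel₀ (hγne i)]
    · simp [Matrix.diagonal_apply_ne _ h, Matrix.one_apply_ne h]
  set D : Matrix (Fin (e + 1)) (Fin (e + 1)) ℝ := (Matrix.diagonal γ)⁻¹ with hDdef
  have hAinj : Function.Injective A.mulVec := aux_mulVec_inj A hA
  have hBinj : Function.Injective B.vecMul := by
    have h0 : Bᵀ.rank = e := by rw [Matrix.rank_transpose]; exact hB
    have h1 := aux_mulVec_inj Bᵀ h0
    intro x y hxy
    apply h1
    rw [Matrix.mulVec_transpose, Matrix.mulVec_transpose]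
    exact hxy
  -- B *ᵥ 1 = 0
  have hB1 : B.mulVec 1 = 0 := by
    apply hAinj
    show A *ᵥ (B *ᵥ 1) = A *ᵥ 0
    rw [Matrix.mulVec_mulVec, ← hQ, Matrix.mulVec_zero]
    exact (hrker 1).mpr ⟨1, by simp⟩
  -- π ᵥ* A = 0
  have hπA : A.vecMul π = 0 := by
    apply hBinj
    show (π ᵥ* A) ᵥ* B = 0 ᵥ* B
    rw [Matrix.vecMul_vecMul, ← hQ, Matrix.zero_vecMul]
    exact (hlker π).mpr ⟨1, by simp⟩
  -- D *ᵥ γ = 1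
  have hDγ : D.mulVec γ = 1 := by
    rw [hD]
    ext i
    simp [Matrix.mulVec_diagonal, inv_mul_cancel₀ (hγne i)]
  set M := B * D * A with hMdef
  -- M injective hence unit
  have hMinj : Function.Injective M.mulVec := by
    intro x y hxy
    have h0 : M *ᵥ (x - y) = 0 := by rw [Matrix.mulVec_sub, hxy, sub_self]
    set z := x - y with hz
    rw [hMdef, ← Matrix.mulVec_mulVec, ← Matrix.mulVec_mulVec] at h0
    -- B *ᵥ (D *ᵥ (A *ᵥ z)) = 0, so Q *ᵥ (D *ᵥ (A *ᵥ z)) = 0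
    have h1 : Q *ᵥ (D *ᵥ (A *ᵥ z)) = 0 := by
      rw [hQ, ← Matrix.mulVec_mulVec, h0, Matrix.mulVec_zero]
    obtain ⟨c, hc⟩ := (hrker _).mp h1
    -- A *ᵥ z = c • γ
    have h2 : A *ᵥ z = c • γ := by
      have h3 : Matrix.diagonal γ *ᵥ (D *ᵥ (A *ᵥ z)) = Matrix.diagonal γ *ᵥ (c • (1 : Fin (e+1) → ℝ)) := by rw [hc]
      rw [Matrix.mulVec_mulVec, Matrix.mul_nonsing_inv _ (by
        rw [Matrix.det_diagonal]; exact (Finset.prod_ne_zero_iff.mpr fun i _ => hγne i).isUnit),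
        Matrix.one_mulVec, Matrix.mulVec_smul] at h3
      rw [h3]
      congr 1
      ext i
      simp [Matrix.mulVec_diagonal]
    -- dot with π
    have h4 : π ⬝ᵥ (A *ᵥ z) = 0 := by
      rw [Matrix.dotProduct_mulVec, hπA, zero_dotProduct]
    rw [h2, dotProduct_smul, smul_eq_mul] at h4
    have hc0 : c = 0 := by
      rcases mul_eq_zero.mp h4 with h | h
      · exact h
      · exact absurd h hγstar
    have h5 : A *ᵥ z = 0 := by rw [h2, hc0, zero_smul]
    have h6 : z = 0 := by
      apply hAinj
      rw [h5, Matrix.mulVec_zero]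
    exact sub_eq_zero.mp h6
  have hMunit : IsUnit M := Matrix.mulVec_injective_iff_isUnit.mp hMinj
  refine ⟨hMunit, ?_⟩
  have hMdet : IsUnit M.det := (Matrix.isUnit_iff_isUnit_det M).mp hMunit
  set E := D - D * A * M⁻¹ * B * D with hEdef
  -- E * A = 0
  have hEA : E * A = 0 := by
    rw [hEdef, Matrix.sub_mul]
    have : D * A * M⁻¹ * B * D * A = D * A := by
      calc D * A * M⁻¹ * B * D * A = D * A * (M⁻¹ * (B * (D * A))) := by
            simp only [Matrix.mul_assoc]
        _ = D * A := by
            rw [show B * (D * A) = M from by rw [hMdef, Matrix.mul_assoc],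
              Matrix.nonsing_inv_mul _ hMdet, Matrix.mul_one]
    rw [this, sub_self]
  -- E *ᵥ γ = 1
  have hEγ : E *ᵥ γ = 1 := by
    rw [hEdef, Matrix.sub_mulVec, hDγ]
    have : (D * A * M⁻¹ * B * D) *ᵥ γ = 0 := by
      rw [← Matrix.mulVec_mulVec, hDγ, ← Matrix.mulVec_mulVec, hB1, Matrix.mulVec_zero]
    rw [this, sub_zero]
  -- each row of E is a multiple of π
  have hrow : ∀ i, ∃ c : ℝ, E i = c • π := by
    intro i
    apply (hlker (E i)).mp
    rw [hQ, ← Matrix.vecMul_vecMul]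
    have : E i ᵥ* A = 0 := by
      ext j
      have := congr_fun (congr_fun hEA i) j
      simpa [Matrix.mul_apply, Matrix.vecMul, dotProduct] using this
    rw [this, Matrix.zero_vecMul]
  -- conclude
  ext i j
  obtain ⟨c, hc⟩ := hrow i
  have h1 : (E *ᵥ γ) i = 1 := by rw [hEγ]; rfl
  have h2 : (E *ᵥ γ) i = c * (π ⬝ᵥ γ) := by
    show E i ⬝ᵥ γ = _
    rw [hc, smul_dotProduct, smul_eq_mul]
  have hcval : c = 1 / (π ⬝ᵥ γ) := by
    rw [eq_div_iff hγstar, mul_comm] at *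
    exact (h2.symm.trans h1).symm ▸ (h2.symm.trans h1)
  have : E i j = c * π j := by rw [hc]; rfl
  rw [this, hcval]
  simp [Matrix.vecMulVec_apply]
end

section
/- Let Q = AB where A is a real d×(d−1) matrix of full column rank and B is a real (d−1)×d matrix of full row rank. Define the d×d matrices A₁ := [A | 𝟏] (the block matrix whose first d−1 columns are A and last column is 𝟏) and B₁ := [B ; −π^T] (whose first d−1 rows are B and last row is −π^T). Then A₁ and B₁ are invertible, A₁B₁ = Q − 𝟏π^T, and A₁B₁ = −(D + 𝟏π^T)^{-1}. -/
open Matrix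

/-- With `A₁ := [A | 𝟏]` and `B₁ := [B ; −πᵀ]`, the matrices `A₁` and `B₁` are
invertible, `A₁B₁ = Q − 𝟏πᵀ` and `A₁B₁ = −(D + 𝟏πᵀ)⁻¹`, where
`D := (𝟏πᵀ − Q)⁻¹ − 𝟏πᵀ` is the deviation matrix.
(The ambient dimension `d ≥ 2` is encoded as `e + 1` with `e ≥ 1`; the last column of `A₁` is `𝟏`
and the last row of `B₁` is `−πᵀ`.) -/
theorem stmt_3
    (e : ℕ) (he : 1 ≤ e)
    (Q : Matrix (Fin (e + 1)) (Fin (e + 1)) ℝ) (π : Fin (e + 1) → ℝ)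
    (hQrank : Q.rank = e)
    (hrker : ∀ v : Fin (e + 1) → ℝ, Q.mulVec v = 0 ↔ ∃ c : ℝ, v = c • (1 : Fin (e + 1) → ℝ))
    (hlker : ∀ w : Fin (e + 1) → ℝ, Q.vecMul w = 0 ↔ ∃ c : ℝ, w = c • π)
    (hπsum : π ⬝ᵥ 1 = 1)
    (hinv : IsUnit (vecMulVec 1 π - Q))
    (A : Matrix (Fin (e + 1)) (Fin e) ℝ) (B : Matrix (Fin e) (Fin (e + 1)) ℝ)
    (hA : A.rank = e) (hB : B.rank = e)
    (hQ : Q = A * B) :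
    IsUnit (Matrix.of fun i => Fin.snoc (A i) (1 : ℝ)) ∧
    IsUnit (Matrix.of (Fin.snoc (fun i => B i) (fun j => -π j))) ∧
    (Matrix.of fun i => Fin.snoc (A i) (1 : ℝ)) *
        (Matrix.of (Fin.snoc (fun i => B i) (fun j => -π j)))
      = Q - vecMulVec 1 π ∧
    (Matrix.of fun i => Fin.snoc (A i) (1 : ℝ)) *
        (Matrix.of (Fin.snoc (fun i => B i) (fun j => -π j)))
      = -((((vecMulVec 1 π - Q)⁻¹ - vecMulVec 1 π) + vecMulVec 1 π)⁻¹) := by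

  set A₁ := (Matrix.of fun i => Fin.snoc (A i) (1 : ℝ)) with hA₁
  set B₁ := (Matrix.of (Fin.snoc (fun i => B i) (fun j => -π j))) with hB₁
  have hprod : A₁ * B₁ = Q - vecMulVec 1 π := by
    ext i j
    simp only [hA₁, hB₁, Matrix.mul_apply, Matrix.of_apply, Fin.sum_univ_castSucc,
      Fin.snoc_castSucc, Fin.snoc_last, hQ, Matrix.sub_apply, Matrix.vecMulVec_apply,
      Pi.one_apply, one_mul, mul_neg, mul_one]
    ring
  have hunit : IsUnit (A₁ * B₁) := by
    rw [hprod]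
    have := hinv.neg
    rwa [neg_sub] at this
  have hdet : IsUnit ((A₁ * B₁).det) := (Matrix.isUnit_iff_isUnit_det _).mp hunit
  rw [Matrix.det_mul] at hdet
  refine ⟨(Matrix.isUnit_iff_isUnit_det _).mpr (isUnit_of_mul_isUnit_left hdet),
    (Matrix.isUnit_iff_isUnit_det _).mpr (isUnit_of_mul_isUnit_right hdet), hprod, ?_⟩
  rw [sub_add_cancel, Matrix.nonsing_inv_nonsing_inv _ ((Matrix.isUnit_iff_isUnit_det _).mp hinv),
    neg_sub]
  exact hprod
end

section
/- Let Q = AB where A is a real d×(d−1) matrix of full column rank and B is a real (d−1)×d matrix of full row rank, and let A₁ := [A | 𝟏] and B₁ := [B ; −π^T] (both invertible). Define A⁺ := [I_{d−1} 0]·A₁^{-1} and B⁺ := B₁^{-1}·[I_{d−1} ; 0]. Then A⁺A = I_{d−1}, BB⁺ = I_{d−1}, and B⁺A⁺ = −D. -/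
/-!
Write `E = [I ; 0]`, `P = [I 0]` and `e` for the last standard basis vector. Then `A₁ E = A`,
`P B₁ = B`, `P E = I` and `E P = I - e eᵀ`, so `A⁺ A = P A₁⁻¹ A₁ E = P E = I` and likewise
`B B⁺ = I`. For the product, `B⁺ A⁺ = B₁⁻¹ (I - e eᵀ) A₁⁻¹ = (A₁ B₁)⁻¹ - (B₁⁻¹ e)(eᵀ A₁⁻¹)` with
`A₁ B₁ = A B - 𝟏 πᵀ = -(𝟏 πᵀ - Q)`. The one-sided inverses turn `Q 𝟏 = 0` and `πᵀ Q = 0` into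
`B 𝟏 = 0` and `πᵀ A = 0`, whence `B₁ (-𝟏) = e` and `πᵀ A₁ = eᵀ`, i.e. `B₁⁻¹ e = -𝟏` and
`eᵀ A₁⁻¹ = πᵀ`.
-/

open Matrix

theorem Fin.snoc_zero_eq_pi_single_last {n : ℕ} {α : Type*} [Zero α] (x : α) :
    (Fin.snoc (0 : Fin n → α) x : Fin (n + 1) → α) = Pi.single (Fin.last n) x := by
  ext i
  induction i using Fin.lastCases <;> simp [Fin.castSucc_ne_last]

namespace Matrix

variable {R : Type*} {m n : ℕ}

def snocCol (A : Matrix (Fin m) (Fin n) R) (c : Fin m → R) : Matrix (Fin m) (Fin (n + 1)) R :=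
  of fun i => Fin.snoc (A i) (c i)

def snocRow (B : Matrix (Fin m) (Fin n) R) (r : Fin n → R) : Matrix (Fin (m + 1)) (Fin n) R :=
  of (Fin.snoc (fun i => B i) r)

variable (R n) in
/-- `[I 0]` -/
def castSuccProj [Zero R] [One R] : Matrix (Fin n) (Fin (n + 1)) R :=
  of fun i j => if j = Fin.castSucc i then 1 else 0

variable (R n) in
/-- `[I ; 0]` -/
def castSuccIncl [Zero R] [One R] : Matrix (Fin (n + 1)) (Fin n) R :=
  of fun i j => if i = Fin.castSucc j then 1 else 0

section Semiring

variable [Semiring R]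

theorem snocCol_mul_castSuccIncl (A : Matrix (Fin m) (Fin n) R) (c : Fin m → R) :
    snocCol A c * castSuccIncl R n = A := by
  ext i j
  simp [snocCol, castSuccIncl, mul_apply]

theorem castSuccProj_mul_snocRow (B : Matrix (Fin m) (Fin n) R) (r : Fin n → R) :
    castSuccProj R m * snocRow B r = B := by
  ext i j
  simp [snocRow, castSuccProj, mul_apply]

theorem castSuccProj_mul_castSuccIncl : castSuccProj R n * castSuccIncl R n = 1 := by
  ext i j
  simp [castSuccProj, castSuccIncl, mul_apply, one_apply, eq_comm]

theorem snocCol_mul_snocRow (A : Matrix (Fin m) (Fin n) R) (c : Fin m → R)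
    (B : Matrix (Fin n) (Fin m) R) (r : Fin m → R) :
    snocCol A c * snocRow B r = A * B + vecMulVec c r := by
  ext i j
  simp [snocCol, snocRow, mul_apply, Fin.sum_univ_castSucc, vecMulVec_apply]

theorem snocRow_mulVec (B : Matrix (Fin m) (Fin n) R) (r v : Fin n → R) :
    snocRow B r *ᵥ v = Fin.snoc (B *ᵥ v) (r ⬝ᵥ v) := by
  ext i
  induction i using Fin.lastCases <;> simp [snocRow, mulVec]

theorem vecMul_snocCol (A : Matrix (Fin m) (Fin n) R) (c w : Fin m → R) :
    w ᵥ* snocCol A c = Fin.snoc (w ᵥ* A) (w ⬝ᵥ c) := by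
  ext j
  induction j using Fin.lastCases <;> simp [snocCol, vecMul, dotProduct]

theorem eq_zero_of_mul_eq_one_of_mulVec_eq_zero {ι κ : Type*} [Fintype ι] [Fintype κ]
    [DecidableEq κ] {L : Matrix κ ι R} {A : Matrix ι κ R} (hLA : L * A = 1) {v : κ → R}
    (hv : A *ᵥ v = 0) : v = 0 := by
  rw [← one_mulVec v, ← hLA, ← mulVec_mulVec, hv, mulVec_zero]

theorem eq_zero_of_mul_eq_one_of_vecMul_eq_zero {ι κ : Type*} [Fintype ι] [Fintype κ]
    [DecidableEq κ] {B : Matrix κ ι R} {S : Matrix ι κ R} (hBS : B * S = 1) {w : κ → R}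
    (hw : w ᵥ* B = 0) : w = 0 := by
  rw [← vecMul_one w, ← hBS, ← vecMul_vecMul, hw, zero_vecMul]

end Semiring

theorem castSuccIncl_mul_castSuccProj [Ring R] :
    castSuccIncl R n * castSuccProj R n =
      1 - vecMulVec (Pi.single (Fin.last n) 1) (Pi.single (Fin.last n) 1) := by
  ext i j
  induction i using Fin.lastCases <;> induction j using Fin.lastCases <;>
    simp [castSuccProj, castSuccIncl, mul_apply, one_apply, vecMulVec_apply,
      (Fin.castSucc_ne_last _).symm]

section CommRing

variable [CommRing R]

theorem inv_neg {ι : Type*} [Fintype ι] [DecidableEq ι] (X : Matrix ι ι R) :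
    (-X)⁻¹ = -X⁻¹ := by
  by_cases h : IsUnit X.det
  · exact inv_eq_left_inv (by rw [neg_mul_neg, nonsing_inv_mul _ h])
  · have h' : ¬IsUnit (-X).det := by
      simpa [det_neg, IsUnit.mul_iff, isUnit_neg_one.pow] using h
    rw [nonsing_inv_apply_not_isUnit _ h, nonsing_inv_apply_not_isUnit _ h', neg_zero]

theorem castSuccProj_mul_inv_snocCol_mul {A : Matrix (Fin (n + 1)) (Fin n) R}
    {c : Fin (n + 1) → R} (h : IsUnit (snocCol A c)) :
    castSuccProj R n * (snocCol A c)⁻¹ * A = 1 := by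
  calc castSuccProj R n * (snocCol A c)⁻¹ * A
      = castSuccProj R n * ((snocCol A c)⁻¹ * snocCol A c) * castSuccIncl R n := by
        simp only [Matrix.mul_assoc, snocCol_mul_castSuccIncl]
    _ = 1 := by
        rw [nonsing_inv_mul _ ((isUnit_iff_isUnit_det _).mp h), Matrix.mul_one,
          castSuccProj_mul_castSuccIncl]

theorem mul_inv_snocRow_mul_castSuccIncl {B : Matrix (Fin n) (Fin (n + 1)) R}
    {r : Fin (n + 1) → R} (h : IsUnit (snocRow B r)) :
    B * ((snocRow B r)⁻¹ * castSuccIncl R n) = 1 := by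
  calc B * ((snocRow B r)⁻¹ * castSuccIncl R n)
      = castSuccProj R n * (snocRow B r * (snocRow B r)⁻¹) * castSuccIncl R n := by
        simp only [← Matrix.mul_assoc, castSuccProj_mul_snocRow]
    _ = 1 := by
        rw [mul_nonsing_inv _ ((isUnit_iff_isUnit_det _).mp h), Matrix.mul_one,
          castSuccProj_mul_castSuccIncl]

theorem inv_mul_castSuccIncl_mul_castSuccProj_mul_inv
    (M N : Matrix (Fin (n + 1)) (Fin (n + 1)) R) :
    M⁻¹ * castSuccIncl R n * (castSuccProj R n * N⁻¹) =
      (N * M)⁻¹ -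
        vecMulVec (M⁻¹ *ᵥ Pi.single (Fin.last n) 1) (Pi.single (Fin.last n) 1 ᵥ* N⁻¹) := by
  rw [Matrix.mul_assoc, ← Matrix.mul_assoc (castSuccIncl R n), castSuccIncl_mul_castSuccProj,
    Matrix.sub_mul, Matrix.one_mul, vecMulVec_mul, Matrix.mul_sub, mul_vecMulVec, mul_inv_rev]

theorem inv_snocRow_mulVec_single_last {B : Matrix (Fin n) (Fin (n + 1)) R}
    {r v : Fin (n + 1) → R} (h : IsUnit (snocRow B r)) (hBv : B *ᵥ v = 0) (hrv : r ⬝ᵥ v = 1) :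
    (snocRow B r)⁻¹ *ᵥ Pi.single (Fin.last n) 1 = v := by
  rw [← Fin.snoc_zero_eq_pi_single_last, ← hBv, ← hrv, ← snocRow_mulVec, mulVec_mulVec,
    nonsing_inv_mul _ ((isUnit_iff_isUnit_det _).mp h), one_mulVec]

theorem single_last_vecMul_inv_snocCol {A : Matrix (Fin (n + 1)) (Fin n) R}
    {c w : Fin (n + 1) → R} (h : IsUnit (snocCol A c)) (hwA : w ᵥ* A = 0) (hwc : w ⬝ᵥ c = 1) :
    Pi.single (Fin.last n) 1 ᵥ* (snocCol A c)⁻¹ = w := by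
  rw [← Fin.snoc_zero_eq_pi_single_last, ← hwA, ← hwc, ← vecMul_snocCol, vecMul_vecMul,
    mul_nonsing_inv _ ((isUnit_iff_isUnit_det _).mp h), vecMul_one]

end CommRing

end Matrix

theorem stmt_4_general
    (e : ℕ)
    (Q : Matrix (Fin (e + 1)) (Fin (e + 1)) ℝ) (π : Fin (e + 1) → ℝ)
    (hrker : ∀ v : Fin (e + 1) → ℝ, Q.mulVec v = 0 ↔ ∃ c : ℝ, v = c • (1 : Fin (e + 1) → ℝ))
    (hlker : ∀ w : Fin (e + 1) → ℝ, Q.vecMul w = 0 ↔ ∃ c : ℝ, w = c • π)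
    (hπsum : π ⬝ᵥ 1 = 1)
    (A : Matrix (Fin (e + 1)) (Fin e) ℝ) (B : Matrix (Fin e) (Fin (e + 1)) ℝ)
    (hQ : Q = A * B)
    (hA₁ : IsUnit (Matrix.of fun i => Fin.snoc (A i) (1 : ℝ)))
    (hB₁ : IsUnit (Matrix.of (Fin.snoc (fun i => B i) (fun j => -π j)))) :
    ((Matrix.of fun (i : Fin e) (j : Fin (e + 1)) => if j = Fin.castSucc i then (1 : ℝ) else 0) *
        (Matrix.of fun i => Fin.snoc (A i) (1 : ℝ))⁻¹) * A = 1 ∧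
    B * ((Matrix.of (Fin.snoc (fun i => B i) (fun j => -π j)))⁻¹ *
        (Matrix.of fun (i : Fin (e + 1)) (j : Fin e) => if i = Fin.castSucc j then (1 : ℝ) else 0))
      = 1 ∧
    ((Matrix.of (Fin.snoc (fun i => B i) (fun j => -π j)))⁻¹ *
        (Matrix.of fun (i : Fin (e + 1)) (j : Fin e) =>
          if i = Fin.castSucc j then (1 : ℝ) else 0)) *
      ((Matrix.of fun (i : Fin e) (j : Fin (e + 1)) => if j = Fin.castSucc i then (1 : ℝ) else 0) *
        (Matrix.of fun i => Fin.snoc (A i) (1 : ℝ))⁻¹)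
      = -((vecMulVec 1 π - Q)⁻¹ - vecMulVec 1 π) := by
  change IsUnit (snocCol A 1) at hA₁
  change IsUnit (snocRow B (-π)) at hB₁
  have hApinv := castSuccProj_mul_inv_snocCol_mul hA₁
  have hBpinv := mul_inv_snocRow_mul_castSuccIncl hB₁
  refine ⟨hApinv, hBpinv, ?_⟩
  have hB1 : B *ᵥ 1 = 0 := eq_zero_of_mul_eq_one_of_mulVec_eq_zero hApinv <| by
    rw [mulVec_mulVec, ← hQ]
    exact (hrker 1).mpr ⟨1, (one_smul ℝ _).symm⟩
  have hπA : π ᵥ* A = 0 := eq_zero_of_mul_eq_one_of_vecMul_eq_zero hBpinv <| by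
    rw [vecMul_vecMul, ← hQ]
    exact (hlker π).mpr ⟨1, (one_smul ℝ _).symm⟩
  have hlastCol := inv_snocRow_mulVec_single_last (v := -1) hB₁
    (by rw [mulVec_neg, hB1, neg_zero]) (by rw [neg_dotProduct_neg, hπsum])
  have hlastRow := single_last_vecMul_inv_snocCol hA₁ hπA hπsum
  have hA₁B₁ : snocCol A 1 * snocRow B (-π) = -(vecMulVec 1 π - Q) := by
    rw [snocCol_mul_snocRow, hQ, vecMulVec_neg]
    abel
  change (snocRow B (-π))⁻¹ * castSuccIncl ℝ e * (castSuccProj ℝ e * (snocCol A 1)⁻¹) = _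
  rw [inv_mul_castSuccIncl_mul_castSuccProj_mul_inv, hlastCol, hlastRow, hA₁B₁, Matrix.inv_neg,
    neg_vecMulVec]
  abel

/-- With `A₁ := [A | 𝟏]`, `B₁ := [B ; −πᵀ]` (both invertible),
`A⁺ := [I 0]·A₁⁻¹` and `B⁺ := B₁⁻¹·[I ; 0]`, one has `A⁺A = I`, `BB⁺ = I` and `B⁺A⁺ = −D`,
where `D := (𝟏πᵀ − Q)⁻¹ − 𝟏πᵀ`.
(The ambient dimension `d ≥ 2` is encoded as `e + 1` with `e ≥ 1`.) -/
theorem stmt_4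
    (e : ℕ) (he : 1 ≤ e)
    (Q : Matrix (Fin (e + 1)) (Fin (e + 1)) ℝ) (π : Fin (e + 1) → ℝ)
    (hQrank : Q.rank = e)
    (hrker : ∀ v : Fin (e + 1) → ℝ, Q.mulVec v = 0 ↔ ∃ c : ℝ, v = c • (1 : Fin (e + 1) → ℝ))
    (hlker : ∀ w : Fin (e + 1) → ℝ, Q.vecMul w = 0 ↔ ∃ c : ℝ, w = c • π)
    (hπsum : π ⬝ᵥ 1 = 1)
    (hinv : IsUnit (vecMulVec 1 π - Q))
    (A : Matrix (Fin (e + 1)) (Fin e) ℝ) (B : Matrix (Fin e) (Fin (e + 1)) ℝ)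
    (hA : A.rank = e) (hB : B.rank = e)
    (hQ : Q = A * B)
    (hA₁ : IsUnit (Matrix.of fun i => Fin.snoc (A i) (1 : ℝ)))
    (hB₁ : IsUnit (Matrix.of (Fin.snoc (fun i => B i) (fun j => -π j)))) :
    ((Matrix.of fun (i : Fin e) (j : Fin (e + 1)) => if j = Fin.castSucc i then (1 : ℝ) else 0) *
        (Matrix.of fun i => Fin.snoc (A i) (1 : ℝ))⁻¹) * A = 1 ∧
    B * ((Matrix.of (Fin.snoc (fun i => B i) (fun j => -π j)))⁻¹ *
        (Matrix.of fun (i : Fin (e + 1)) (j : Fin e) => if i = Fin.castSucc j then (1 : ℝ) else 0))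
      = 1 ∧
    ((Matrix.of (Fin.snoc (fun i => B i) (fun j => -π j)))⁻¹ *
        (Matrix.of fun (i : Fin (e + 1)) (j : Fin e) =>
          if i = Fin.castSucc j then (1 : ℝ) else 0)) *
      ((Matrix.of fun (i : Fin e) (j : Fin (e + 1)) => if j = Fin.castSucc i then (1 : ℝ) else 0) *
        (Matrix.of fun i => Fin.snoc (A i) (1 : ℝ))⁻¹)
      = -((vecMulVec 1 π - Q)⁻¹ - vecMulVec 1 π) :=
  stmt_4_general e Q π hrker hlker hπsum A B hQ hA₁ hB₁
end

section
/- Let N ∈ ℕ and let p : {1,…,d} × {0,…,N} → ℝ satisfy, for all i and all m ∈ {0,…,N}, the stationary balance equations 0 = Σ_{j=1}^d p_j(m) q_{ji} + p_i(m+1) μ_i (m+1) + p_i(m−1) λ_i (N−m+1) − p_i(m) μ_i m − p_i(m) λ_i (N−m), with the conventions p_i(−1) = p_i(N+1) = 0. Define the row vectors π with π_i := Σ_{m=0}^N p_i(m) and e₁ with (e₁)_i := Σ_{m=0}^N m·p_i(m). Then e₁^T(Λ + M − Q) = N·π^TΛ; in particular, if Λ + M − Q is invertible, then Σ_{i=1}^d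 (e₁)_i = N·π^TΛ(Λ + M − Q)^{-1}𝟏. -/
open Matrix

private lemma shiftUp (f : ℤ → ℝ) (n : ℕ) :
    ∑ m ∈ Finset.range (n + 1), f ((m : ℤ) + 1)
      = ∑ m ∈ Finset.range (n + 1), f (m : ℤ) + f ((n : ℤ) + 1) - f 0 := by
  induction n with
  | zero => simp
  | succ n ih =>
      rw [Finset.sum_range_succ, ih, Finset.sum_range_succ (fun m => f (m : ℤ)) (n + 1)]
      push_cast
      ring

private lemma shiftDown (f : ℤ → ℝ) (n : ℕ) :
    ∑ m ∈ Finset.range (n + 1), f ((m : ℤ) - 1)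
      = ∑ m ∈ Finset.range (n + 1), f (m : ℤ) + f (-1) - f (n : ℤ) := by
  induction n with
  | zero => simp
  | succ n ih =>
      rw [Finset.sum_range_succ, ih, Finset.sum_range_succ (fun m => f (m : ℤ)) (n + 1)]
      push_cast
      ring

private lemma vecMul_aux (d : ℕ) (Q : Matrix (Fin d) (Fin d) ℝ) (lam mu v : Fin d → ℝ)
    (i : Fin d) :
    Matrix.vecMul v (Matrix.diagonal lam + Matrix.diagonal mu - Q) i
      = v i * lam i + v i * mu i - ∑ j, v j * Q j i := by
  simp only [Matrix.vecMul, dotProduct, Matrix.sub_apply, Matrix.add_apply,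
    Matrix.diagonal_apply, mul_sub, mul_ite, mul_zero, Finset.sum_sub_distrib,
    Finset.sum_ite_eq', Finset.mem_univ, if_true, mul_add, Finset.sum_add_distrib]

/-- If `p` satisfies the stationary balance equations, then with
`πᵢ := Σₘ pᵢ(m)` and `(e₁)ᵢ := Σₘ m·pᵢ(m)` one has `e₁ᵀ(Λ + M − Q) = N·πᵀΛ`; in particular, if
`Λ + M − Q` is invertible, then `Σᵢ (e₁)ᵢ = N·πᵀΛ(Λ + M − Q)⁻¹𝟏`. -/
theorem stmt_6
    (d : ℕ) (hd : 1 ≤ d)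
    (Q : Matrix (Fin d) (Fin d) ℝ) (lam mu : Fin d → ℝ)
    (hQoff : ∀ i j, i ≠ j → 0 ≤ Q i j)
    (hQrow : ∀ i, ∑ j, Q i j = 0)
    (hlam : ∀ i, 0 ≤ lam i) (hmu : ∀ i, 0 ≤ mu i)
    (N : ℕ) (p : Fin d → ℤ → ℝ)
    (hp0 : ∀ (i : Fin d) (m : ℤ), m < 0 ∨ (N : ℤ) < m → p i m = 0)
    (hbal : ∀ (i : Fin d) (m : ℤ), 0 ≤ m → m ≤ (N : ℤ) →
      0 = (∑ j, p j m * Q j i) + p i (m + 1) * mu i * ((m : ℝ) + 1)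
          + p i (m - 1) * lam i * ((N : ℝ) - (m : ℝ) + 1)
          - p i m * mu i * (m : ℝ) - p i m * lam i * ((N : ℝ) - (m : ℝ))) :
    Matrix.vecMul (fun i => ∑ m ∈ Finset.range (N + 1), (m : ℝ) * p i (m : ℤ))
        (Matrix.diagonal lam + Matrix.diagonal mu - Q)
      = (N : ℝ) • Matrix.vecMul (fun i => ∑ m ∈ Finset.range (N + 1), p i (m : ℤ))
          (Matrix.diagonal lam) ∧
    (IsUnit (Matrix.diagonal lam + Matrix.diagonal mu - Q) →
      (∑ i, ∑ m ∈ Finset.range (N + 1), (m : ℝ) * p i (m : ℤ))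
        = (N : ℝ) * (Matrix.vecMul (fun i => ∑ m ∈ Finset.range (N + 1), p i (m : ℤ))
            (Matrix.diagonal lam * (Matrix.diagonal lam + Matrix.diagonal mu - Q)⁻¹) ⬝ᵥ 1)) := by
  set e : Fin d → ℝ := fun i => ∑ m ∈ Finset.range (N + 1), (m : ℝ) * p i (m : ℤ) with he
  set pv : Fin d → ℝ := fun i => ∑ m ∈ Finset.range (N + 1), p i (m : ℤ) with hpv
  have key : ∀ i, e i * lam i + e i * mu i - ∑ j, e j * Q j i = (N : ℝ) * (pv i * lam i) := by
    intro i
    have hsum : (0 : ℝ) = ∑ m ∈ Finset.range (N + 1), (m : ℝ) *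
        ((∑ j, p j (m : ℤ) * Q j i) + p i ((m : ℤ) + 1) * mu i * ((m : ℝ) + 1)
          + p i ((m : ℤ) - 1) * lam i * ((N : ℝ) - (m : ℝ) + 1)
          - p i (m : ℤ) * mu i * (m : ℝ) - p i (m : ℤ) * lam i * ((N : ℝ) - (m : ℝ))) := by
      rw [Finset.sum_eq_zero]
      intro m hm
      have h1 : (0 : ℤ) ≤ (m : ℤ) := Int.ofNat_nonneg m
      have h2 : (m : ℤ) ≤ (N : ℤ) := by
        exact_mod_cast Nat.lt_succ_iff.mp (Finset.mem_range.mp hm)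
      have hb := hbal i (m : ℤ) h1 h2
      push_cast at hb
      rw [← hb, mul_zero]
    have step : ∑ m ∈ Finset.range (N + 1), (m : ℝ) *
        ((∑ j, p j (m : ℤ) * Q j i) + p i ((m : ℤ) + 1) * mu i * ((m : ℝ) + 1)
          + p i ((m : ℤ) - 1) * lam i * ((N : ℝ) - (m : ℝ) + 1)
          - p i (m : ℤ) * mu i * (m : ℝ) - p i (m : ℤ) * lam i * ((N : ℝ) - (m : ℝ)))
        = (∑ m ∈ Finset.range (N + 1), (m : ℝ) * ∑ j, p j (m : ℤ) * Q j i)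
          + (∑ m ∈ Finset.range (N + 1),
              (fun x : ℤ => ((x : ℝ) - 1) * (x : ℝ) * mu i * p i x) ((m : ℤ) + 1))
          + (∑ m ∈ Finset.range (N + 1),
              (fun x : ℤ => ((x : ℝ) + 1) * ((N : ℝ) - (x : ℝ)) * lam i * p i x) ((m : ℤ) - 1))
          - (∑ m ∈ Finset.range (N + 1), (m : ℝ) * (m : ℝ) * mu i * p i (m : ℤ))
          - (∑ m ∈ Finset.range (N + 1), (m : ℝ) * ((N : ℝ) - (m : ℝ)) * lam i * p i (m : ℤ)) := by
      rw [← Finset.sum_add_distrib, ← Finset.sum_add_distrib, ← Finset.sum_sub_distrib,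
        ← Finset.sum_sub_distrib]
      refine Finset.sum_congr rfl fun m _ => ?_
      simp only
      push_cast
      ring
    have hswap : ∑ m ∈ Finset.range (N + 1), (m : ℝ) * ∑ j, p j (m : ℤ) * Q j i
        = ∑ j, e j * Q j i := by
      simp_rw [Finset.mul_sum]
      rw [Finset.sum_comm]
      refine Finset.sum_congr rfl fun j _ => ?_
      rw [he]
      simp only
      rw [Finset.sum_mul]
      exact Finset.sum_congr rfl fun m _ => by ring
    have hpN : p i ((N : ℤ) + 1) = 0 := hp0 i _ (Or.inr (by omega))
    have hpm : p i (-1) = 0 := hp0 i _ (Or.inl (by omega))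
    have hF := shiftUp (fun x : ℤ => ((x : ℝ) - 1) * (x : ℝ) * mu i * p i x) N
    have hG := shiftDown (fun x : ℤ => ((x : ℝ) + 1) * ((N : ℝ) - (x : ℝ)) * lam i * p i x) N
    simp only [hpN, hpm, mul_zero, zero_mul, Int.cast_zero, Int.cast_natCast, sub_self,
      mul_zero, zero_mul, add_zero, sub_zero] at hF hG
    rw [step, hswap, hF, hG] at hsum
    have hid : (∑ m ∈ Finset.range (N + 1), ((m : ℝ) - 1) * (m : ℝ) * mu i * p i (m : ℤ))
        + (∑ m ∈ Finset.range (N + 1),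
            ((m : ℝ) + 1) * ((N : ℝ) - (m : ℝ)) * lam i * p i (m : ℤ))
        - (∑ m ∈ Finset.range (N + 1), (m : ℝ) * (m : ℝ) * mu i * p i (m : ℤ))
        - (∑ m ∈ Finset.range (N + 1), (m : ℝ) * ((N : ℝ) - (m : ℝ)) * lam i * p i (m : ℤ))
        = -(mu i * e i) + lam i * ((N : ℝ) * pv i) - lam i * e i := by
      rw [he, hpv]
      simp only [Finset.mul_sum, ← Finset.sum_neg_distrib, ← Finset.sum_add_distrib,
        ← Finset.sum_sub_distrib]
      exact Finset.sum_congr rfl fun m _ => by push_cast; ring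
    linarith [hsum, hid]
  have h1 : Matrix.vecMul e (Matrix.diagonal lam + Matrix.diagonal mu - Q)
      = (N : ℝ) • Matrix.vecMul pv (Matrix.diagonal lam) := by
    funext i
    rw [vecMul_aux, key i, Pi.smul_apply, Matrix.vecMul_diagonal, smul_eq_mul]
  refine ⟨h1, fun hU => ?_⟩
  set A := Matrix.diagonal lam + Matrix.diagonal mu - Q with hA
  have hAinv : A * A⁻¹ = 1 := Matrix.mul_nonsing_inv A ((Matrix.isUnit_iff_isUnit_det A).mp hU)
  have h2 : e = (N : ℝ) • Matrix.vecMul pv (Matrix.diagonal lam * A⁻¹) := by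
    calc e = Matrix.vecMul e 1 := by simp
      _ = Matrix.vecMul e (A * A⁻¹) := by rw [hAinv]
      _ = Matrix.vecMul (Matrix.vecMul e A) A⁻¹ := by rw [Matrix.vecMul_vecMul]
      _ = Matrix.vecMul ((N : ℝ) • Matrix.vecMul pv (Matrix.diagonal lam)) A⁻¹ := by rw [h1]
      _ = (N : ℝ) • Matrix.vecMul (Matrix.vecMul pv (Matrix.diagonal lam)) A⁻¹ := by
            rw [Matrix.smul_vecMul]
      _ = (N : ℝ) • Matrix.vecMul pv (Matrix.diagonal lam * A⁻¹) := by
            rw [Matrix.vecMul_vecMul]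
  have h3 : (∑ i, e i) = e ⬝ᵥ 1 := by simp [dotProduct]
  rw [h3, h2]
  simp [smul_dotProduct]
end

section
/- Let N ∈ ℕ and let p : {1,…,d} × {0,…,N} → ℝ satisfy, for all i and all m ∈ {0,…,N}, the stationary balance equations 0 = Σ_{j=1}^d p_j(m) q_{ji} + p_i(m+1) μ_i (m+1) + p_i(m−1) λ_i (N−m+1) − p_i(m) μ_i m − p_i(m) λ_i (N−m), with the conventions p_i(−1) = p_i(N+1) = 0. Define the row vectors e_k with (e_k)_i := Σ_{m=0}^N (m)_k · p_i(m), where (m)_k := m(m−1)⋯(m−k+1) is the falling factorial. Then for every k with 2 ≤ k ≤ N one has e_k^T(kΛ + kM − Q) = k(N−k+1)·e_{k−1}^T Λ. -/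
/-!
Multiply the balance equation at level `m` by a test function `f m` and sum over `m`: summation
by parts moves the shifts `m ± 1` from `p` onto `f`, so the `i`-th entry of `e_f Q` becomes the
`p_i`-average of the birth–death generator (birth rate `λᵢ (N - m)`, death rate `μᵢ m`) applied
to `f`. The generator maps the falling factorial `(m)_k` to a combination of `(m)_k` and
`(m)_{k-1}`, which is the claimed identity.
-/

open Matrix Finset

theorem Nat.cast_descFactorial_succ {R : Type*} [CommRing R] (m k : ℕ) :
    (m.descFactorial (k + 1) : R) = (m - k) * m.descFactorial k := by
  rw [← descPochhammer_eval_eq_descFactorial, descPochhammer_succ_eval,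
    descPochhammer_eval_eq_descFactorial, mul_comm]

theorem Nat.cast_mul_descFactorial_sub_one {R : Type*} [CommRing R] (m k : ℕ) :
    (m * (m - 1).descFactorial k : R) = (m - k) * m.descFactorial k := by
  cases m with
  | zero => cases k <;> simp
  | succ n =>
    rw [Nat.add_sub_cancel, ← Nat.cast_descFactorial_succ, Nat.succ_descFactorial_succ]
    push_cast; ring

theorem Nat.cast_succ_descFactorial_succ_sub {R : Type*} [CommRing R] (m k : ℕ) :
    ((m + 1).descFactorial (k + 1) - m.descFactorial (k + 1) : R) =
      (k + 1) * m.descFactorial k := by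
  rw [Nat.succ_descFactorial_succ, Nat.cast_descFactorial_succ]; push_cast; ring

theorem Finset.sum_range_succ_eq_sum_range {M : Type*} [AddCommGroup M] (F : ℕ → M) (n : ℕ)
    (h0 : F 0 = 0) (hn : F n = 0) :
    ∑ m ∈ range n, F (m + 1) = ∑ m ∈ range n, F m := by
  have h := (sum_range_succ' F n).symm.trans (sum_range_succ F n)
  rwa [h0, hn, add_zero, add_zero] at h

def weightedSum (N : ℕ) (f : ℕ → ℝ) (q : ℤ → ℝ) : ℝ :=
  ∑ m ∈ range (N + 1), f m * q m

/-- The truncated `m - 1` at `m = 0` is harmless: the death rate `death * m` vanishes there. -/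
def birthDeathGenerator (N : ℕ) (birth death : ℝ) (f : ℕ → ℝ) (m : ℕ) : ℝ :=
  birth * (N - m) * (f (m + 1) - f m) + death * m * (f (m - 1) - f m)

theorem birthDeathGenerator_descFactorial (N j : ℕ) (birth death : ℝ) :
    birthDeathGenerator N birth death (fun m => (m.descFactorial (j + 1) : ℝ)) =
      fun m => (j + 1) * (N - j) * birth * m.descFactorial j
        - (j + 1) * (birth + death) * m.descFactorial (j + 1) := by
  funext m
  have hbirth := Nat.cast_succ_descFactorial_succ_sub (R := ℝ) m j
  have hdeath := Nat.cast_mul_descFactorial_sub_one (R := ℝ) m (j + 1)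
  have hstep := Nat.cast_descFactorial_succ (R := ℝ) m j
  push_cast at hdeath
  simp only [birthDeathGenerator]
  linear_combination birth * (N - m) * hbirth + death * hdeath
    + (j + 1) * birth * hstep

theorem vecMul_weightedSum_apply_of_balance {d N : ℕ} {Q : Matrix (Fin d) (Fin d) ℝ}
    {lam mu : Fin d → ℝ} {p : Fin d → ℤ → ℝ}
    (hbal : ∀ (i : Fin d) (m : ℤ), 0 ≤ m → m ≤ (N : ℤ) →
      0 = (∑ j, p j m * Q j i) + p i (m + 1) * mu i * ((m : ℝ) + 1)
          + p i (m - 1) * lam i * ((N : ℝ) - (m : ℝ) + 1)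
          - p i m * mu i * (m : ℝ) - p i m * lam i * ((N : ℝ) - (m : ℝ)))
    (i : Fin d) (hlow : p i (-1) = 0) (hhigh : p i (N + 1) = 0) (f : ℕ → ℝ) :
    ((fun j => weightedSum N f (p j)) ᵥ* Q) i =
      -weightedSum N (birthDeathGenerator N (lam i) (mu i) f) (p i) := by
  have hdeath : ∑ m ∈ range (N + 1), f m * (p i (m + 1) * mu i * ((m : ℝ) + 1)) =
      ∑ m ∈ range (N + 1), f (m - 1) * mu i * m * p i m := by
    rw [← sum_range_succ_eq_sum_range (fun m => f (m - 1) * mu i * m * p i m) _ (by simp)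
      (by simp [hhigh])]
    simp only [Nat.add_sub_cancel]; push_cast; exact sum_congr rfl fun m _ => by ring
  have hbirth : ∑ m ∈ range (N + 1), f m * (p i (m - 1) * lam i * ((N : ℝ) - m + 1)) =
      ∑ m ∈ range (N + 1), f (m + 1) * lam i * (N - m) * p i m := by
    rw [← sum_range_succ_eq_sum_range _ _ (by simp [hlow]) (by push_cast; ring)]
    push_cast; exact sum_congr rfl fun m _ => by ring_nf
  have hbal_sum : ∑ m ∈ range (N + 1), f m * ∑ j, p j m * Q j i =
      ∑ m ∈ range (N + 1), f m * (p i m * mu i * m + p i m * lam i * (N - m))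
        - ∑ m ∈ range (N + 1), f m * (p i (m + 1) * mu i * ((m : ℝ) + 1))
        - ∑ m ∈ range (N + 1), f m * (p i (m - 1) * lam i * ((N : ℝ) - m + 1)) := by
    rw [← sum_sub_distrib, ← sum_sub_distrib]
    refine sum_congr rfl fun m hm => ?_
    have := hbal i m (by positivity) (by have := mem_range.1 hm; omega)
    push_cast at this
    linear_combination (-f m) * this
  calc ((fun j => weightedSum N f (p j)) ᵥ* Q) i
      = ∑ m ∈ range (N + 1), f m * ∑ j, p j m * Q j i := by
        simp only [vecMul, dotProduct, weightedSum, sum_mul, mul_sum, mul_assoc]; exact sum_comm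
    _ = _ := by
        rw [hbal_sum, hdeath, hbirth, weightedSum, ← sum_neg_distrib, ← sum_sub_distrib,
          ← sum_sub_distrib]
        exact sum_congr rfl fun m _ => by simp only [birthDeathGenerator]; ring

theorem stmt_7_general
    (d : ℕ)
    (Q : Matrix (Fin d) (Fin d) ℝ) (lam mu : Fin d → ℝ)
    (N : ℕ) (p : Fin d → ℤ → ℝ)
    (hp0 : ∀ (i : Fin d) (m : ℤ), m < 0 ∨ (N : ℤ) < m → p i m = 0)
    (hbal : ∀ (i : Fin d) (m : ℤ), 0 ≤ m → m ≤ (N : ℤ) →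
      0 = (∑ j, p j m * Q j i) + p i (m + 1) * mu i * ((m : ℝ) + 1)
          + p i (m - 1) * lam i * ((N : ℝ) - (m : ℝ) + 1)
          - p i m * mu i * (m : ℝ) - p i m * lam i * ((N : ℝ) - (m : ℝ))) :
    ∀ k : ℕ, 2 ≤ k → k ≤ N →
      Matrix.vecMul (fun i => ∑ m ∈ Finset.range (N + 1), (m.descFactorial k : ℝ) * p i (m : ℤ))
          ((k : ℝ) • Matrix.diagonal lam + (k : ℝ) • Matrix.diagonal mu - Q)
        = ((k : ℝ) * ((N : ℝ) - (k : ℝ) + 1)) •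
            Matrix.vecMul
              (fun i => ∑ m ∈ Finset.range (N + 1), (m.descFactorial (k - 1) : ℝ) * p i (m : ℤ))
              (Matrix.diagonal lam) := by
  intro k hk _
  obtain ⟨j, rfl⟩ : ∃ j, k = j + 1 := ⟨k - 1, by omega⟩
  change (fun i => weightedSum N (fun m => (m.descFactorial (j + 1) : ℝ)) (p i)) ᵥ* _
    = _ • (fun i => weightedSum N (fun m => (m.descFactorial j : ℝ)) (p i)) ᵥ* _
  funext i
  rw [vecMul_sub, vecMul_add, vecMul_smul, vecMul_smul]
  simp only [Pi.sub_apply, Pi.add_apply, Pi.smul_apply, smul_eq_mul, vecMul_diagonal]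
  rw [vecMul_weightedSum_apply_of_balance hbal i (hp0 i _ (by norm_num))
    (hp0 i _ (by right; omega)), birthDeathGenerator_descFactorial]
  simp only [weightedSum, sub_mul, sum_sub_distrib, mul_assoc, ← mul_sum]
  push_cast
  ring

/-- If `p` satisfies the stationary balance equations, then with
`(e_k)ᵢ := Σₘ (m)_k·pᵢ(m)` (falling factorials), for every `2 ≤ k ≤ N` one has
`e_kᵀ(kΛ + kM − Q) = k(N−k+1)·e_{k−1}ᵀΛ`. -/
theorem stmt_7
    (d : ℕ) (hd : 1 ≤ d)
    (Q : Matrix (Fin d) (Fin d) ℝ) (lam mu : Fin d → ℝ)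
    (hQoff : ∀ i j, i ≠ j → 0 ≤ Q i j)
    (hQrow : ∀ i, ∑ j, Q i j = 0)
    (hlam : ∀ i, 0 ≤ lam i) (hmu : ∀ i, 0 ≤ mu i)
    (N : ℕ) (p : Fin d → ℤ → ℝ)
    (hp0 : ∀ (i : Fin d) (m : ℤ), m < 0 ∨ (N : ℤ) < m → p i m = 0)
    (hbal : ∀ (i : Fin d) (m : ℤ), 0 ≤ m → m ≤ (N : ℤ) →
      0 = (∑ j, p j m * Q j i) + p i (m + 1) * mu i * ((m : ℝ) + 1)
          + p i (m - 1) * lam i * ((N : ℝ) - (m : ℝ) + 1)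
          - p i m * mu i * (m : ℝ) - p i m * lam i * ((N : ℝ) - (m : ℝ))) :
    ∀ k : ℕ, 2 ≤ k → k ≤ N →
      Matrix.vecMul (fun i => ∑ m ∈ Finset.range (N + 1), (m.descFactorial k : ℝ) * p i (m : ℤ))
          ((k : ℝ) • Matrix.diagonal lam + (k : ℝ) • Matrix.diagonal mu - Q)
        = ((k : ℝ) * ((N : ℝ) - (k : ℝ) + 1)) •
            Matrix.vecMul
              (fun i => ∑ m ∈ Finset.range (N + 1), (m.descFactorial (k - 1) : ℝ) * p i (m : ℤ))
              (Matrix.diagonal lam) :=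
  stmt_7_general d Q lam mu N p hp0 hbal
end

section
/- Let N ∈ ℕ and let p : {1,…,d} × {0,…,N} → ℝ satisfy, for all i and all m ∈ {0,…,N}, the stationary balance equations 0 = Σ_{j=1}^d p_j(m) q_{ji} + p_i(m+1) μ_i (m+1) + p_i(m−1) λ_i (N−m+1) − p_i(m) μ_i m − p_i(m) λ_i (N−m), with the conventions p_i(−1) = p_i(N+1) = 0. Define π_i := Σ_{m=0}^N p_i(m) and (e_k)_i := Σ_{m=0}^N (m)_k·p_i(m), where (m)_k is the falling factorial. Assume that jΛ + jM − Q is invertible for j = 1,…,N. Then for every k with 1 ≤ k ≤ N, e_k^T = k!·(N)_k·π^T Λ(Λ+M−Q)^{-1} Λ(2Λ+2M−Q)^{-1} ⋯ Λ(kΛ+kM−Q)^{-1}, and e_k^T = 0 for every k > N. -/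
open Matrix Finset

private lemma df_mj (m j : ℕ) :
    ((m : ℝ) - j) * m.descFactorial j = m.descFactorial (j + 1) := by
  rcases le_or_gt j m with h | h
  · rw [Nat.descFactorial_succ]
    push_cast [h]
    ring
  · rw [Nat.descFactorial_of_lt h, Nat.descFactorial_of_lt (h.trans (Nat.lt_succ_self j))]
    simp

private lemma df_mul (m k : ℕ) :
    (m : ℝ) * m.descFactorial k = m.descFactorial (k + 1) + k * m.descFactorial k := by
  rw [← df_mj m k]; ring

private lemma df_shift (m j : ℕ) :
    ((m + 1).descFactorial (j + 1) : ℝ)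
      = m.descFactorial (j + 1) + ((j : ℝ) + 1) * m.descFactorial j := by
  rw [Nat.succ_descFactorial_succ]
  push_cast
  rw [← df_mj m j]
  ring

private lemma shift_sum (g : ℕ → ℝ) (N : ℕ) (h0 : g 0 = 0) (hN : g (N + 1) = 0) :
    ∑ m ∈ Finset.range (N + 1), g (m + 1) = ∑ m ∈ Finset.range (N + 1), g m := by
  have h := Finset.sum_range_succ' g (N + 1)
  rw [Finset.sum_range_succ g (N + 1)] at h
  rw [h0, hN] at h
  linarith

private lemma recursion (d : ℕ)
    (Q : Matrix (Fin d) (Fin d) ℝ) (lam mu : Fin d → ℝ)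
    (N : ℕ) (p : Fin d → ℤ → ℝ)
    (hp0 : ∀ (i : Fin d) (m : ℤ), m < 0 ∨ (N : ℤ) < m → p i m = 0)
    (hbal : ∀ (i : Fin d) (m : ℤ), 0 ≤ m → m ≤ (N : ℤ) →
      0 = (∑ j, p j m * Q j i) + p i (m + 1) * mu i * ((m : ℝ) + 1)
          + p i (m - 1) * lam i * ((N : ℝ) - (m : ℝ) + 1)
          - p i m * mu i * (m : ℝ) - p i m * lam i * ((N : ℝ) - (m : ℝ)))
    (j : ℕ) (i : Fin d) :
    ((j : ℝ) + 1) * lam i * (∑ m ∈ Finset.range (N + 1), (m.descFactorial (j + 1) : ℝ) * p i (m : ℤ))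
      + ((j : ℝ) + 1) * mu i * (∑ m ∈ Finset.range (N + 1), (m.descFactorial (j + 1) : ℝ) * p i (m : ℤ))
      - (∑ l, (∑ m ∈ Finset.range (N + 1), (m.descFactorial (j + 1) : ℝ) * p l (m : ℤ)) * Q l i)
    = ((j : ℝ) + 1) * ((N : ℝ) - (j : ℝ)) *
        ((∑ m ∈ Finset.range (N + 1), (m.descFactorial j : ℝ) * p i (m : ℤ)) * lam i) := by
  have key : (0 : ℝ) = ∑ m ∈ Finset.range (N + 1), (m.descFactorial (j + 1) : ℝ) *
      ((∑ l, p l (m : ℤ) * Q l i) + p i ((m : ℤ) + 1) * mu i * ((m : ℝ) + 1)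
        + p i ((m : ℤ) - 1) * lam i * ((N : ℝ) - (m : ℝ) + 1)
        - p i (m : ℤ) * mu i * (m : ℝ) - p i (m : ℤ) * lam i * ((N : ℝ) - (m : ℝ))) := by
    rw [Finset.sum_eq_zero]
    intro m hm
    have h := hbal i (m : ℤ) (Int.ofNat_nonneg m)
      (by exact_mod_cast Nat.lt_succ_iff.mp (Finset.mem_range.mp hm))
    push_cast at h
    rw [← h, mul_zero]
  -- split the sum into five pieces
  have key2 : (0 : ℝ) =
      (∑ m ∈ Finset.range (N + 1), (m.descFactorial (j + 1) : ℝ) * (∑ l, p l (m : ℤ) * Q l i))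
      + (∑ m ∈ Finset.range (N + 1), (m.descFactorial (j + 1) : ℝ) * (p i ((m : ℤ) + 1) * mu i * ((m : ℝ) + 1)))
      + (∑ m ∈ Finset.range (N + 1), (m.descFactorial (j + 1) : ℝ) * (p i ((m : ℤ) - 1) * lam i * ((N : ℝ) - (m : ℝ) + 1)))
      - (∑ m ∈ Finset.range (N + 1), (m.descFactorial (j + 1) : ℝ) * (p i (m : ℤ) * mu i * (m : ℝ)))
      - (∑ m ∈ Finset.range (N + 1), (m.descFactorial (j + 1) : ℝ) * (p i (m : ℤ) * lam i * ((N : ℝ) - (m : ℝ)))) := by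
    rw [key, ← Finset.sum_add_distrib, ← Finset.sum_add_distrib, ← Finset.sum_sub_distrib,
      ← Finset.sum_sub_distrib]
    exact Finset.sum_congr rfl fun m _ => by ring
  -- the Q piece
  have hQ : ∑ m ∈ Finset.range (N + 1), (m.descFactorial (j + 1) : ℝ) * (∑ l, p l (m : ℤ) * Q l i)
      = ∑ l, (∑ m ∈ Finset.range (N + 1), (m.descFactorial (j + 1) : ℝ) * p l (m : ℤ)) * Q l i := by
    simp_rw [Finset.mul_sum]
    rw [Finset.sum_comm]
    refine Finset.sum_congr rfl fun l _ => ?_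
    rw [Finset.sum_mul]
    exact Finset.sum_congr rfl fun m _ => by ring
  -- the mu shift piece
  have hT1 : ∑ m ∈ Finset.range (N + 1), (m.descFactorial (j + 1) : ℝ) * (p i ((m : ℤ) + 1) * mu i * ((m : ℝ) + 1))
      = ∑ m ∈ Finset.range (N + 1), mu i * ((m.descFactorial (j + 2) : ℝ) * p i (m : ℤ)) := by
    have step : ∀ m : ℕ, (m.descFactorial (j + 1) : ℝ) * (p i ((m : ℤ) + 1) * mu i * ((m : ℝ) + 1))
        = (fun n : ℕ => mu i * ((n.descFactorial (j + 2) : ℝ) * p i (n : ℤ))) (m + 1) := by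
      intro m
      show _ = mu i * (((m + 1).descFactorial (j + 2) : ℝ) * p i ((m + 1 : ℕ) : ℤ))
      rw [Nat.succ_descFactorial_succ]
      push_cast
      ring
    rw [Finset.sum_congr rfl fun m _ => step m]
    refine shift_sum (fun n : ℕ => mu i * ((n.descFactorial (j + 2) : ℝ) * p i (n : ℤ))) N ?_ ?_
    · simp
    · have h : p i ((N + 1 : ℕ) : ℤ) = 0 := hp0 i _ (Or.inr (by exact_mod_cast Nat.lt_succ_self N))
      show mu i * (((N + 1).descFactorial (j + 2) : ℝ) * p i ((N + 1 : ℕ) : ℤ)) = 0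
      rw [h, mul_zero, mul_zero]
  -- the lambda shift piece
  have hT2 : ∑ m ∈ Finset.range (N + 1), (m.descFactorial (j + 1) : ℝ) * (p i ((m : ℤ) - 1) * lam i * ((N : ℝ) - (m : ℝ) + 1))
      = ∑ m ∈ Finset.range (N + 1), ((m + 1).descFactorial (j + 1) : ℝ) * (p i (m : ℤ) * lam i * ((N : ℝ) - (m : ℝ))) := by
    have e1 : ∑ m ∈ Finset.range (N + 1), (m.descFactorial (j + 1) : ℝ) * (p i ((m : ℤ) - 1) * lam i * ((N : ℝ) - (m : ℝ) + 1))
        = ∑ x ∈ Finset.range N, ((x + 1).descFactorial (j + 1) : ℝ) * (p i (x : ℤ) * lam i * ((N : ℝ) - (x : ℝ))) := by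
      rw [Finset.sum_range_succ']
      simp only [Nat.zero_descFactorial_succ, Nat.cast_zero, zero_mul, add_zero]
      refine Finset.sum_congr rfl fun x _ => ?_
      have harg : ((x + 1 : ℕ) : ℤ) - 1 = (x : ℤ) := by push_cast; ring
      rw [harg]
      push_cast
      ring
    have e2 : ∑ x ∈ Finset.range (N + 1), ((x + 1).descFactorial (j + 1) : ℝ) * (p i (x : ℤ) * lam i * ((N : ℝ) - (x : ℝ)))
        = ∑ x ∈ Finset.range N, ((x + 1).descFactorial (j + 1) : ℝ) * (p i (x : ℤ) * lam i * ((N : ℝ) - (x : ℝ))) := by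
      rw [Finset.sum_range_succ]
      simp
    rw [e1, e2]
  -- pointwise combination of the four non-Q pieces
  have hcomb :
      (∑ m ∈ Finset.range (N + 1), mu i * ((m.descFactorial (j + 2) : ℝ) * p i (m : ℤ)))
      + (∑ m ∈ Finset.range (N + 1), ((m + 1).descFactorial (j + 1) : ℝ) * (p i (m : ℤ) * lam i * ((N : ℝ) - (m : ℝ))))
      - (∑ m ∈ Finset.range (N + 1), (m.descFactorial (j + 1) : ℝ) * (p i (m : ℤ) * mu i * (m : ℝ)))
      - (∑ m ∈ Finset.range (N + 1), (m.descFactorial (j + 1) : ℝ) * (p i (m : ℤ) * lam i * ((N : ℝ) - (m : ℝ))))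
      = ((j : ℝ) + 1) * (lam i * ((N : ℝ) - (j : ℝ)) * (∑ m ∈ Finset.range (N + 1), (m.descFactorial j : ℝ) * p i (m : ℤ))
          - mu i * (∑ m ∈ Finset.range (N + 1), (m.descFactorial (j + 1) : ℝ) * p i (m : ℤ))
          - lam i * (∑ m ∈ Finset.range (N + 1), (m.descFactorial (j + 1) : ℝ) * p i (m : ℤ))) := by
    rw [← Finset.sum_add_distrib, ← Finset.sum_sub_distrib, ← Finset.sum_sub_distrib,
      Finset.mul_sum, Finset.mul_sum, Finset.mul_sum, ← Finset.sum_sub_distrib,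
      ← Finset.sum_sub_distrib, Finset.mul_sum]
    refine Finset.sum_congr rfl fun m _ => ?_
    have h1 := df_mul m (j + 1)
    push_cast at h1
    have h2 := df_shift m j
    have h3 := df_mj m j
    linear_combination (-(mu i * p i (m : ℤ))) * h1
      + (lam i * ((N : ℝ) - (m : ℝ)) * p i (m : ℤ)) * h2
      - (((j : ℝ) + 1) * lam i * p i (m : ℤ)) * h3
  rw [hQ, hT1, hT2] at key2
  linarith [key2, hcomb]

/-- If `p` satisfies the stationary balance equations and `jΛ + jM − Q` is
invertible for `j = 1,…,N`, then for every `1 ≤ k ≤ N`,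
`e_kᵀ = k!·(N)_k·πᵀ Λ(Λ+M−Q)⁻¹ Λ(2Λ+2M−Q)⁻¹ ⋯ Λ(kΛ+kM−Q)⁻¹`, and `e_kᵀ = 0` for `k > N`. -/
theorem stmt_8
    (d : ℕ) (hd : 1 ≤ d)
    (Q : Matrix (Fin d) (Fin d) ℝ) (lam mu : Fin d → ℝ)
    (hQoff : ∀ i j, i ≠ j → 0 ≤ Q i j)
    (hQrow : ∀ i, ∑ j, Q i j = 0)
    (hlam : ∀ i, 0 ≤ lam i) (hmu : ∀ i, 0 ≤ mu i)
    (N : ℕ) (p : Fin d → ℤ → ℝ)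
    (hp0 : ∀ (i : Fin d) (m : ℤ), m < 0 ∨ (N : ℤ) < m → p i m = 0)
    (hbal : ∀ (i : Fin d) (m : ℤ), 0 ≤ m → m ≤ (N : ℤ) →
      0 = (∑ j, p j m * Q j i) + p i (m + 1) * mu i * ((m : ℝ) + 1)
          + p i (m - 1) * lam i * ((N : ℝ) - (m : ℝ) + 1)
          - p i m * mu i * (m : ℝ) - p i m * lam i * ((N : ℝ) - (m : ℝ)))
    (hunit : ∀ j : ℕ, 1 ≤ j → j ≤ N →
      IsUnit ((j : ℝ) • Matrix.diagonal lam + (j : ℝ) • Matrix.diagonal mu - Q)) :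
    (∀ k : ℕ, 1 ≤ k → k ≤ N →
      (fun i => ∑ m ∈ Finset.range (N + 1), (m.descFactorial k : ℝ) * p i (m : ℤ))
        = ((Nat.factorial k * Nat.descFactorial N k : ℕ) : ℝ) •
            Matrix.vecMul (fun i => ∑ m ∈ Finset.range (N + 1), p i (m : ℤ))
              (((List.range k).map (fun j =>
                  Matrix.diagonal lam *
                    (((j : ℝ) + 1) • Matrix.diagonal lam + ((j : ℝ) + 1) • Matrix.diagonal mu
                      - Q)⁻¹)).prod)) ∧
    (∀ k : ℕ, N < k →
      (fun i => ∑ m ∈ Finset.range (N + 1), (m.descFactorial k : ℝ) * p i (m : ℤ))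
        = (0 : Fin d → ℝ)) := by
  constructor
  · have hmain : ∀ k : ℕ, k ≤ N →
        (fun i => ∑ m ∈ Finset.range (N + 1), (m.descFactorial k : ℝ) * p i (m : ℤ))
          = ((Nat.factorial k * Nat.descFactorial N k : ℕ) : ℝ) •
              Matrix.vecMul (fun i => ∑ m ∈ Finset.range (N + 1), p i (m : ℤ))
                (((List.range k).map (fun j =>
                    Matrix.diagonal lam *
                      (((j : ℝ) + 1) • Matrix.diagonal lam + ((j : ℝ) + 1) • Matrix.diagonal mu
                        - Q)⁻¹)).prod) := by
      intro k
      induction k with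
      | zero =>
        intro _
        simp [Matrix.vecMul_one]
      | succ k ih =>
        intro hk
        simp only [bind_pure_comp, List.map_eq_map, List.map_map] at ih ⊢
        have hk' : k ≤ N := Nat.le_of_succ_le hk
        set A : Matrix (Fin d) (Fin d) ℝ :=
          ((k : ℝ) + 1) • Matrix.diagonal lam + ((k : ℝ) + 1) • Matrix.diagonal mu - Q with hA
        have hu : IsUnit A := by
          have h := hunit (k + 1) (Nat.succ_le_succ (Nat.zero_le k)) hk
          push_cast at h
          exact h
        have hAinv : A * A⁻¹ = 1 := Matrix.mul_nonsing_inv A ((Matrix.isUnit_iff_isUnit_det A).mp hu)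
        have hvm : Matrix.vecMul
              (fun i => ∑ m ∈ Finset.range (N + 1), (m.descFactorial (k + 1) : ℝ) * p i (m : ℤ)) A
            = (((k : ℝ) + 1) * ((N : ℝ) - (k : ℝ))) • Matrix.vecMul
                (fun i => ∑ m ∈ Finset.range (N + 1), (m.descFactorial k : ℝ) * p i (m : ℤ))
                (Matrix.diagonal lam) := by
          funext i
          have h := recursion d Q lam mu N p hp0 hbal k i
          simp only [hA, Matrix.vecMul, dotProduct, Matrix.sub_apply, Matrix.add_apply,
            Matrix.smul_apply, Matrix.diagonal_apply, smul_eq_mul, mul_ite, mul_zero, ite_mul,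
            zero_mul, mul_add, mul_sub, Finset.sum_add_distrib, Finset.sum_sub_distrib,
            Finset.sum_ite_eq, Finset.sum_ite_eq', Finset.mem_univ, if_true, Pi.smul_apply]
          linarith [h]
        have he : (fun i => ∑ m ∈ Finset.range (N + 1), (m.descFactorial (k + 1) : ℝ) * p i (m : ℤ))
            = (((k : ℝ) + 1) * ((N : ℝ) - (k : ℝ))) • Matrix.vecMul
                (fun i => ∑ m ∈ Finset.range (N + 1), (m.descFactorial k : ℝ) * p i (m : ℤ))
                (Matrix.diagonal lam * A⁻¹) := by
          calc (fun i => ∑ m ∈ Finset.range (N + 1), (m.descFactorial (k + 1) : ℝ) * p i (m : ℤ))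
              = Matrix.vecMul (fun i => ∑ m ∈ Finset.range (N + 1), (m.descFactorial (k + 1) : ℝ) * p i (m : ℤ)) 1 := (Matrix.vecMul_one _).symm
            _ = Matrix.vecMul (fun i => ∑ m ∈ Finset.range (N + 1), (m.descFactorial (k + 1) : ℝ) * p i (m : ℤ)) (A * A⁻¹) := by rw [hAinv]
            _ = Matrix.vecMul (Matrix.vecMul (fun i => ∑ m ∈ Finset.range (N + 1), (m.descFactorial (k + 1) : ℝ) * p i (m : ℤ)) A) A⁻¹ := (Matrix.vecMul_vecMul _ _ _).symm
            _ = Matrix.vecMul ((((k : ℝ) + 1) * ((N : ℝ) - (k : ℝ))) • Matrix.vecMul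
                  (fun i => ∑ m ∈ Finset.range (N + 1), (m.descFactorial k : ℝ) * p i (m : ℤ))
                  (Matrix.diagonal lam)) A⁻¹ := by rw [hvm]
            _ = (((k : ℝ) + 1) * ((N : ℝ) - (k : ℝ))) • Matrix.vecMul (Matrix.vecMul
                  (fun i => ∑ m ∈ Finset.range (N + 1), (m.descFactorial k : ℝ) * p i (m : ℤ))
                  (Matrix.diagonal lam)) A⁻¹ := Matrix.smul_vecMul _ _ _
            _ = (((k : ℝ) + 1) * ((N : ℝ) - (k : ℝ))) • Matrix.vecMul
                  (fun i => ∑ m ∈ Finset.range (N + 1), (m.descFactorial k : ℝ) * p i (m : ℤ))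
                  (Matrix.diagonal lam * A⁻¹) := by rw [Matrix.vecMul_vecMul]
        rw [he, ih hk', Matrix.smul_vecMul, Matrix.vecMul_vecMul, smul_smul]
        rw [List.range_succ, List.map_append, List.prod_append, List.map_cons, List.map_nil,
          List.prod_cons, List.prod_nil, mul_one]
        simp only [Function.comp_apply]
        rw [hA]
        congr 1
        have h1 : N.descFactorial (k + 1) = (N - k) * N.descFactorial k := Nat.descFactorial_succ N k
        push_cast [h1, Nat.factorial_succ, Nat.cast_sub hk']
        ring
    intro k _ hk2
    exact hmain k hk2
  · intro k hk
    funext i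
    simp only [Pi.zero_apply]
    refine Finset.sum_eq_zero fun m hm => ?_
    have hmk : m < k := lt_of_le_of_lt (Nat.lt_succ_iff.mp (Finset.mem_range.mp hm)) hk
    rw [Nat.descFactorial_eq_zero_iff_lt.mpr hmk]
    simp
end

section
/- Let N ∈ ℕ and let p : {1,…,d} × {0,…,N} × [0,∞) → ℝ be such that each t ↦ p_i(m,t) is differentiable and satisfies the Kolmogorov forward equations p_i'(m,t) = Σ_{j=1}^d p_j(m,t) q_{ji} + p_i(m+1,t) μ_i (m+1) + p_i(m−1,t) λ_i (N−m+1) − p_i(m,t) μ_i m − p_i(m,t) λ_i (N−m), with p_i(−1,t) = p_i(N+1,t) = 0. Define φ_i(t,z) := Σ_{m=0}^N p_i(m,t) z^m. Then for all t ≥ 0, z ∈ ℝ, and i: ∂φ_i/∂t (t,z) = Σ_{j=1}^d φ_j(t,z) q_{ji} + μ_i (1−z) ∂φ_i/∂z (t,z) + λ_i N (z−1) φ_i(t,z) + λ_i z (1−z) ∂φ_i/∂z (t,z). -/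
/-
Multiplying the forward equation for `pᵢ(m,·)` by `zᵐ` and summing over `m` turns the
birth–death part into first-order operators in `z`: a shift `m ↦ m + 1` of the coefficients
is the derivative `∂/∂z`, a shift `m ↦ m - 1` is multiplication by `z`, and the weight `m`
is the Euler operator `z ∂/∂z`. The boundary conditions `pᵢ(-1,·) = pᵢ(N+1,·) = 0` make the
shifted sums close up over `0, …, N`.
-/

open Finset

section GeneratingPolynomial

variable (N : ℕ) (c : ℤ → ℝ) (z : ℝ)

theorem hasDerivAt_sum_range_mul_pow :
    HasDerivAt (fun w => ∑ m ∈ range (N + 1), c m * w ^ m)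
      (∑ m ∈ range (N + 1), c m * ((m : ℝ) * z ^ (m - 1))) z :=
  HasDerivAt.fun_sum fun m _ => (hasDerivAt_pow m z).const_mul _

theorem mul_sum_range_mul_pow_sub_one :
    z * ∑ m ∈ range (N + 1), c m * ((m : ℝ) * z ^ (m - 1))
      = ∑ m ∈ range (N + 1), c m * m * z ^ m := by
  rw [mul_sum]
  refine sum_congr rfl fun m _ => ?_
  cases m with
  | zero => simp
  | succ k => rw [Nat.add_sub_cancel, pow_succ]; ring

theorem sum_range_shift_down (hN : c (N + 1) = 0) :
    ∑ m ∈ range (N + 1), c (m + 1) * ((m : ℝ) + 1) * z ^ m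
      = ∑ m ∈ range (N + 1), c m * ((m : ℝ) * z ^ (m - 1)) := by
  rw [sum_range_succ, hN, sum_range_succ']
  simp only [Nat.cast_zero, zero_mul, mul_zero, add_zero, Nat.add_sub_cancel]
  push_cast
  exact sum_congr rfl fun m _ => by ring

theorem sum_range_shift_up (h₀ : c (-1) = 0) :
    ∑ m ∈ range (N + 1), c (m - 1) * ((N : ℝ) - m + 1) * z ^ m
      = z * ∑ m ∈ range (N + 1), c m * ((N : ℝ) - m) * z ^ m := by
  rw [sum_range_succ', sum_range_succ, mul_add]
  simp only [Nat.cast_zero, zero_sub, h₀, zero_mul, sub_self, mul_zero, add_zero,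
    mul_sum]
  push_cast
  exact sum_congr rfl fun m _ => by rw [add_sub_cancel_right, pow_succ]; ring

theorem sum_range_birthDeath_mul_pow (a b : ℝ) (h₀ : c (-1) = 0) (hN : c (N + 1) = 0) :
    ∑ m ∈ range (N + 1),
        (c (m + 1) * a * ((m : ℝ) + 1) + c (m - 1) * b * ((N : ℝ) - m + 1)
          - c m * a * m - c m * b * ((N : ℝ) - m)) * z ^ m
      = a * (1 - z) * ∑ m ∈ range (N + 1), c m * ((m : ℝ) * z ^ (m - 1))
        + b * N * (z - 1) * ∑ m ∈ range (N + 1), c m * z ^ m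
        + b * z * (1 - z) * ∑ m ∈ range (N + 1), c m * ((m : ℝ) * z ^ (m - 1)) := by
  have hsplit : ∑ m ∈ range (N + 1),
        (c (m + 1) * a * ((m : ℝ) + 1) + c (m - 1) * b * ((N : ℝ) - m + 1)
          - c m * a * m - c m * b * ((N : ℝ) - m)) * z ^ m
      = a * ∑ m ∈ range (N + 1), c (m + 1) * ((m : ℝ) + 1) * z ^ m
        + b * ∑ m ∈ range (N + 1), c (m - 1) * ((N : ℝ) - m + 1) * z ^ m
        - a * ∑ m ∈ range (N + 1), c m * m * z ^ m
        - b * ∑ m ∈ range (N + 1), c m * ((N : ℝ) - m) * z ^ m := by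
    simp only [mul_sum, ← sum_add_distrib, ← sum_sub_distrib]
    exact sum_congr rfl fun m _ => by ring
  have hcomplement : ∑ m ∈ range (N + 1), c m * ((N : ℝ) - m) * z ^ m
      = N * ∑ m ∈ range (N + 1), c m * z ^ m - ∑ m ∈ range (N + 1), c m * m * z ^ m := by
    simp only [mul_sum, ← sum_sub_distrib]
    exact sum_congr rfl fun m _ => by ring
  rw [hsplit, sum_range_shift_down N c z hN, sum_range_shift_up N c z h₀, hcomplement,
    ← mul_sum_range_mul_pow_sub_one]
  ring

end GeneratingPolynomial

theorem stmt_9_general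
    (d : ℕ)
    (Q : Matrix (Fin d) (Fin d) ℝ) (lam mu : Fin d → ℝ)
    (N : ℕ) (p : Fin d → ℤ → ℝ → ℝ)
    (hp0 : ∀ (i : Fin d) (m : ℤ) (t : ℝ), m < 0 ∨ (N : ℤ) < m → p i m t = 0)
    (hderiv : ∀ (i : Fin d) (m : ℤ) (t : ℝ), 0 ≤ m → m ≤ (N : ℤ) → 0 ≤ t →
      HasDerivAt (p i m)
        ((∑ j, p j m t * Q j i) + p i (m + 1) t * mu i * ((m : ℝ) + 1)
          + p i (m - 1) t * lam i * ((N : ℝ) - (m : ℝ) + 1)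
          - p i m t * mu i * (m : ℝ) - p i m t * lam i * ((N : ℝ) - (m : ℝ))) t) :
    ∀ (t : ℝ), 0 ≤ t → ∀ (z : ℝ) (i : Fin d),
      HasDerivAt (fun s => ∑ m ∈ Finset.range (N + 1), p i (m : ℤ) s * z ^ m)
        ((∑ j, (∑ m ∈ Finset.range (N + 1), p j (m : ℤ) t * z ^ m) * Q j i)
          + mu i * (1 - z) *
              deriv (fun w => ∑ m ∈ Finset.range (N + 1), p i (m : ℤ) t * w ^ m) z
          + lam i * (N : ℝ) * (z - 1) * (∑ m ∈ Finset.range (N + 1), p i (m : ℤ) t * z ^ m)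
          + lam i * z * (1 - z) *
              deriv (fun w => ∑ m ∈ Finset.range (N + 1), p i (m : ℤ) t * w ^ m) z) t := by
  intro t ht z i
  rw [(hasDerivAt_sum_range_mul_pow N (p i · t) z).deriv]
  have hterm : ∀ m ∈ range (N + 1), HasDerivAt (fun s => p i m s * z ^ m)
      (((∑ j, p j m t * Q j i) + p i (m + 1) t * mu i * ((m : ℝ) + 1)
          + p i (m - 1) t * lam i * ((N : ℝ) - m + 1)
          - p i m t * mu i * m - p i m t * lam i * ((N : ℝ) - m)) * z ^ m) t := fun m hm => by
    have hmN : (m : ℤ) ≤ N := by have := mem_range.mp hm; omega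
    simpa only [Int.cast_natCast] using
      (hderiv i m t (Int.natCast_nonneg m) hmN ht).mul_const (z ^ m)
  have hcoupling : ∑ m ∈ range (N + 1), (∑ j, p j m t * Q j i) * z ^ m
      = ∑ j, (∑ m ∈ range (N + 1), p j m t * z ^ m) * Q j i := by
    simp only [sum_mul]
    rw [sum_comm]
    exact sum_congr rfl fun j _ => sum_congr rfl fun m _ => by ring
  refine (HasDerivAt.fun_sum hterm).congr_deriv ?_
  rw [← hcoupling, add_assoc, add_assoc, ← add_assoc (_ * _ * _),
    ← sum_range_birthDeath_mul_pow N (p i · t) z (mu i) (lam i)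
      (hp0 i _ t (Or.inl (by norm_num))) (hp0 i _ t (Or.inr (by omega))),
    ← sum_add_distrib]
  exact sum_congr rfl fun m _ => by ring

/-- If `t ↦ pᵢ(m,t)` satisfies the Kolmogorov forward equations, then
`φᵢ(t,z) := Σₘ pᵢ(m,t)zᵐ` satisfies the PDE
`∂φᵢ/∂t = Σⱼ φⱼ q_{ji} + μᵢ(1−z)∂φᵢ/∂z + λᵢN(z−1)φᵢ + λᵢz(1−z)∂φᵢ/∂z`. -/
theorem stmt_9
    (d : ℕ) (hd : 1 ≤ d)
    (Q : Matrix (Fin d) (Fin d) ℝ) (lam mu : Fin d → ℝ)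
    (hQoff : ∀ i j, i ≠ j → 0 ≤ Q i j)
    (hQrow : ∀ i, ∑ j, Q i j = 0)
    (hlam : ∀ i, 0 ≤ lam i) (hmu : ∀ i, 0 ≤ mu i)
    (N : ℕ) (p : Fin d → ℤ → ℝ → ℝ)
    (hp0 : ∀ (i : Fin d) (m : ℤ) (t : ℝ), m < 0 ∨ (N : ℤ) < m → p i m t = 0)
    (hderiv : ∀ (i : Fin d) (m : ℤ) (t : ℝ), 0 ≤ m → m ≤ (N : ℤ) → 0 ≤ t →
      HasDerivAt (p i m)
        ((∑ j, p j m t * Q j i) + p i (m + 1) t * mu i * ((m : ℝ) + 1)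
          + p i (m - 1) t * lam i * ((N : ℝ) - (m : ℝ) + 1)
          - p i m t * mu i * (m : ℝ) - p i m t * lam i * ((N : ℝ) - (m : ℝ))) t) :
    ∀ (t : ℝ), 0 ≤ t → ∀ (z : ℝ) (i : Fin d),
      HasDerivAt (fun s => ∑ m ∈ Finset.range (N + 1), p i (m : ℤ) s * z ^ m)
        ((∑ j, (∑ m ∈ Finset.range (N + 1), p j (m : ℤ) t * z ^ m) * Q j i)
          + mu i * (1 - z) *
              deriv (fun w => ∑ m ∈ Finset.range (N + 1), p i (m : ℤ) t * w ^ m) z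
          + lam i * (N : ℝ) * (z - 1) * (∑ m ∈ Finset.range (N + 1), p i (m : ℤ) t * z ^ m)
          + lam i * z * (1 - z) *
              deriv (fun w => ∑ m ∈ Finset.range (N + 1), p i (m : ℤ) t * w ^ m) z) t :=
  stmt_9_general d Q lam mu N p hp0 hderiv
end

section
/- Fix δ > 0. For N ∈ ℕ large enough that Γ − N^δ Q and 2Γ − N^δ Q are invertible, define m₁(N) := N·π^TΛ(Γ − N^δ Q)^{-1}𝟏, m₂(N) := 2N(N−1)·π^TΛ(Γ − N^δ Q)^{-1}Λ(2Γ − N^δ Q)^{-1}𝟏, and V(N) := m₂(N) + m₁(N) − m₁(N)². Then, as N → ∞, V(N) = N·ρ̄(1−ρ̄) + N^{2−δ}·v + o(N^{max{1, 2−δ}}), where v := (1/γ⋆)·π^T(Λ − ρ̄Γ)D(Λ − ρ̄Γ)𝟏. -/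
/-!
Put `ε = N^{-δ}` and `S = γπᵀ - Q`, which is invertible. Since `Q𝟏 = 0`,
`(cΓ - N^δ Q)(cε I + 𝟏πᵀ) = c (cεΓ + S)`, so `(Γ - N^δ Q)⁻¹ = R(ε)` and
`(2Γ - N^δ Q)⁻¹ = R(2ε)/2` for a matrix function `R` that is differentiable at `0`, with
`R(0) = 𝟏πᵀ/γ⋆`. Then `m₁ = N f₁(ε)`, `m₂ = N(N-1) f₂(ε)` and
`V = N² (f₂ - f₁²)(ε) + N (f₁ - f₂)(ε)`, where `f₁(0) = ρ̄` and `f₂(0) = ρ̄²`. So the second term is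
`N ρ̄(1-ρ̄) + o(N)` and the first is `N^{2-δ} (f₂ - f₁²)'(0) + o(N^{2-δ})`. Differentiating,
`(f₂ - f₁²)'(0) = πᵀ(Λ - ρ̄Γ) S⁻¹ (Λ - ρ̄Γ)𝟏 / γ⋆`, and on vectors orthogonal to `π`, such as
`(Λ - ρ̄Γ)𝟏`, the inverse `S⁻¹` acts as the deviation matrix `D` does.
-/

open Matrix Filter Asymptotics Topology

section LinearAlgebra

variable {n K : Type*} [Fintype n] [Field K] {Q : Matrix n n K} {π : n → K}

theorem vecMulVec_sub_mulVec (u v : n → K) :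
    (vecMulVec u π - Q) *ᵥ v = (π ⬝ᵥ v) • u - Q *ᵥ v := by
  rw [sub_mulVec, vecMulVec_mulVec, op_smul_eq_smul]

theorem vecMul_vecMulVec_sub (hπQ : π ᵥ* Q = 0) (u : n → K) :
    π ᵥ* (vecMulVec u π - Q) = (π ⬝ᵥ u) • π := by
  rw [vecMul_sub, vecMul_vecMulVec, hπQ, sub_zero]

theorem diagonal_mulVec_one [DecidableEq n] (γ : n → K) : diagonal γ *ᵥ 1 = γ := by
  ext i; simp [mulVec_diagonal]

theorem vecMul_diagonal_dotProduct_one [DecidableEq n] (π γ : n → K) :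
    π ᵥ* diagonal γ ⬝ᵥ 1 = π ⬝ᵥ γ := by
  rw [← dotProduct_mulVec, diagonal_mulVec_one]

theorem vecMul_nonsing_inv_of_vecMul_eq_smul [DecidableEq n] {A : Matrix n n K} (hA : IsUnit A)
    {c : K} (hc : c ≠ 0) (h : π ᵥ* A = c • π) : π ᵥ* A⁻¹ = c⁻¹ • π := by
  rw [← inv_smul_smul₀ hc (π ᵥ* A⁻¹), ← smul_vecMul, ← h, vecMul_vecMul,
    mul_nonsing_inv _ ((isUnit_iff_isUnit_det A).1 hA), vecMul_one]

theorem isUnit_vecMulVec_sub [DecidableEq n] (hker : ∀ v, Q *ᵥ v = 0 → ∃ c : K, v = c • 1)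
    (hπQ : π ᵥ* Q = 0) (hπ1 : π ⬝ᵥ 1 ≠ 0) {u : n → K} (hu : π ⬝ᵥ u ≠ 0) :
    IsUnit (vecMulVec u π - Q) := by
  refine mulVec_injective_iff_isUnit.1
    ((injective_iff_map_eq_zero (mulVecLin _)).2 fun v hv => ?_)
  rw [mulVecLin_apply] at hv
  have hπv : π ⬝ᵥ v = 0 := by
    have h := congrArg (π ⬝ᵥ ·) hv
    simp only [dotProduct_mulVec, vecMul_vecMulVec_sub hπQ, smul_dotProduct, smul_eq_mul,
      dotProduct_zero, mul_eq_zero] at h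
    exact h.resolve_left hu
  obtain ⟨c, rfl⟩ := hker v <| by
    rwa [vecMulVec_sub_mulVec, hπv, zero_smul, zero_sub, neg_eq_zero] at hv
  rw [dotProduct_smul, smul_eq_mul, mul_eq_zero] at hπv
  rw [hπv.resolve_right hπ1, zero_smul]

/-- Both sides are the solution `x` of `-Q x = b` normalised by `π ⬝ᵥ x = 0`. -/
theorem nonsing_inv_vecMulVec_sub_mulVec_eq [DecidableEq n]
    (hker : ∀ v, Q *ᵥ v = 0 → ∃ c : K, v = c • 1) (hπQ : π ᵥ* Q = 0) (hπ1 : π ⬝ᵥ 1 ≠ 0)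
    {u u' b : n → K} (hu : π ⬝ᵥ u ≠ 0) (hu' : π ⬝ᵥ u' ≠ 0) (hb : π ⬝ᵥ b = 0) :
    (vecMulVec u π - Q)⁻¹ *ᵥ b = (vecMulVec u' π - Q)⁻¹ *ᵥ b := by
  have hU := isUnit_vecMulVec_sub hker hπQ hπ1 hu
  have hU' := isUnit_vecMulVec_sub hker hπQ hπ1 hu'
  set x := (vecMulVec u' π - Q)⁻¹ *ᵥ b
  have hπx : π ⬝ᵥ x = 0 := by
    rw [dotProduct_mulVec, vecMul_nonsing_inv_of_vecMul_eq_smul hU' hu'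
      (vecMul_vecMulVec_sub hπQ u'), smul_dotProduct, hb, smul_zero]
  have hx : (vecMulVec u π - Q) *ᵥ x = b := by
    rw [vecMulVec_sub_mulVec, hπx, zero_smul, ← zero_smul K u', ← hπx, ← vecMulVec_sub_mulVec,
      mulVec_mulVec, mul_nonsing_inv _ ((isUnit_iff_isUnit_det _).1 hU'), one_mulVec]
  rw [← hx, mulVec_mulVec, nonsing_inv_mul _ ((isUnit_iff_isUnit_det _).1 hU), one_mulVec]

variable [DecidableEq n]

/-- Equal to `(diagonal γ - s⁻¹ • Q)⁻¹` for `s ≠ 0`, but regular at `s = 0`. -/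
noncomputable def scaledResolvent (Q : Matrix n n K) (π γ : n → K) (s : K) : Matrix n n K :=
  (s • 1 + vecMulVec 1 π) * (s • diagonal γ + (vecMulVec γ π - Q))⁻¹

theorem smul_diagonal_sub_smul_mul (hQ1 : Q *ᵥ 1 = 0) (γ : n → K) {c t : K} (ht : t ≠ 0) :
    (c • diagonal γ - t • Q) * ((c * t⁻¹) • 1 + vecMulVec 1 π)
      = c • ((c * t⁻¹) • diagonal γ + (vecMulVec γ π - Q)) := by
  have hQE : Q * vecMulVec 1 π = 0 := by rw [mul_vecMulVec, hQ1, zero_vecMulVec]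
  simp only [sub_mul, mul_add, smul_mul_assoc, mul_smul_comm, mul_one, hQE, mul_vecMulVec,
    diagonal_mulVec_one, smul_zero]
  match_scalars <;> field_simp

theorem inv_smul_diagonal_sub_smul (hQ1 : Q *ᵥ 1 = 0) {γ : n → K} {c t : K} (hc : c ≠ 0)
    (ht : t ≠ 0) (hU : IsUnit ((c * t⁻¹) • diagonal γ + (vecMulVec γ π - Q))) :
    (c • diagonal γ - t • Q)⁻¹ = c⁻¹ • scaledResolvent Q π γ (c * t⁻¹) := by
  refine inv_eq_right_inv ?_
  rw [scaledResolvent, mul_smul_comm, ← Matrix.mul_assoc, smul_diagonal_sub_smul_mul hQ1 γ ht,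
    smul_mul_assoc, mul_nonsing_inv _ ((isUnit_iff_isUnit_det _).1 hU), inv_smul_smul₀ hc]

theorem scaledResolvent_zero {γ : n → K} (hπQ : π ᵥ* Q = 0) (hγ : π ⬝ᵥ γ ≠ 0)
    (hS : IsUnit (vecMulVec γ π - Q)) :
    scaledResolvent Q π γ 0 = (π ⬝ᵥ γ)⁻¹ • vecMulVec 1 π := by
  rw [scaledResolvent, zero_smul, zero_smul, zero_add, zero_add, vecMulVec_mul,
    vecMul_nonsing_inv_of_vecMul_eq_smul hS hγ (vecMul_vecMulVec_sub hπQ γ), vecMulVec_smul]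

theorem vecMul_diagonal_vecMul_dotProduct_eq_deviation (hker : ∀ v, Q *ᵥ v = 0 → ∃ c : K, v = c • 1)
    (hπQ : π ᵥ* Q = 0) (hQ1 : Q *ᵥ 1 = 0) (hπ1 : π ⬝ᵥ 1 = 1) {γ lam : n → K}
    (hγ : π ⬝ᵥ γ ≠ 0) :
    π ᵥ* diagonal lam ᵥ* ((vecMulVec γ π - Q)⁻¹ -
        vecMulVec 1 π * ((vecMulVec γ π - Q)⁻¹ * diagonal γ * (vecMulVec γ π - Q)⁻¹)) ⬝ᵥ lam
      = π ᵥ* ((diagonal lam - ((π ⬝ᵥ lam) / (π ⬝ᵥ γ)) • diagonal γ) *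
          ((vecMulVec 1 π - Q)⁻¹ - vecMulVec 1 π) *
          (diagonal lam - ((π ⬝ᵥ lam) / (π ⬝ᵥ γ)) • diagonal γ)) ⬝ᵥ 1 := by
  have hπ1' : π ⬝ᵥ 1 ≠ 0 := hπ1 ▸ one_ne_zero
  set S := vecMulVec γ π - Q
  set ρ := (π ⬝ᵥ lam) / (π ⬝ᵥ γ)
  set A := diagonal lam - ρ • diagonal γ
  have hS := isUnit_vecMulVec_sub hker hπQ hπ1' hγ
  have hπS : π ᵥ* S⁻¹ = (π ⬝ᵥ γ)⁻¹ • π :=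
    vecMul_nonsing_inv_of_vecMul_eq_smul hS hγ (vecMul_vecMulVec_sub hπQ γ)
  have hSγ : S⁻¹ *ᵥ γ = 1 := by
    have hS1 : S *ᵥ 1 = γ := by rw [vecMulVec_sub_mulVec, hπ1, one_smul, hQ1, sub_zero]
    rw [← hS1, mulVec_mulVec, nonsing_inv_mul _ ((isUnit_iff_isUnit_det _).1 hS), one_mulVec]
  have hlam : lam = A *ᵥ 1 + ρ • γ := by
    rw [sub_mulVec, smul_mulVec, diagonal_mulVec_one, diagonal_mulVec_one, sub_add_cancel]
  have hπA1 : π ⬝ᵥ A *ᵥ 1 = 0 := by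
    rw [eq_sub_of_add_eq hlam.symm, dotProduct_sub, dotProduct_smul, smul_eq_mul,
      div_mul_cancel₀ _ hγ, sub_self]
  have hrow : π ᵥ* diagonal lam ᵥ* (S⁻¹ - vecMulVec 1 π * (S⁻¹ * diagonal γ * S⁻¹))
      = π ᵥ* A ᵥ* S⁻¹ := by
    simp only [A, vecMul_sub, sub_vecMul, ← vecMul_vecMul, vecMul_vecMulVec, smul_vecMul,
      vecMul_smul, hπS, vecMul_diagonal_dotProduct_one, smul_smul, ρ, div_eq_mul_inv]
  have hπA : π ᵥ* A ⬝ᵥ 1 = 0 := by rw [← dotProduct_mulVec, hπA1]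
  calc _ = π ᵥ* A ⬝ᵥ S⁻¹ *ᵥ lam := by rw [hrow, dotProduct_mulVec]
    _ = π ᵥ* A ⬝ᵥ S⁻¹ *ᵥ (A *ᵥ 1) := by
        rw [hlam, mulVec_add, mulVec_smul, hSγ, dotProduct_add, dotProduct_smul, hπA, smul_zero,
          add_zero]
    _ = π ᵥ* A ⬝ᵥ (vecMulVec 1 π - Q)⁻¹ *ᵥ (A *ᵥ 1) := by
        rw [nonsing_inv_vecMulVec_sub_mulVec_eq hker hπQ hπ1' hγ hπ1' hπA1]
    _ = _ := by
        conv_rhs => rw [← vecMul_vecMul, ← vecMul_vecMul, ← dotProduct_mulVec,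
          ← dotProduct_mulVec, sub_mulVec, vecMulVec_mulVec, op_smul_eq_smul, hπA1, zero_smul,
          sub_zero]

end LinearAlgebra

section Asymptotics

theorem isBigO_natCast_rpow_of_le {a b : ℝ} (hab : a ≤ b) :
    (fun N : ℕ => (N : ℝ) ^ a) =O[atTop] fun N : ℕ => (N : ℝ) ^ b := by
  refine IsBigO.of_bound 1 ?_
  filter_upwards [eventually_ge_atTop 1] with N hN
  have hN1 : (1 : ℝ) ≤ N := by exact_mod_cast hN
  rw [Real.norm_of_nonneg (by positivity), Real.norm_of_nonneg (by positivity), one_mul]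
  exact Real.rpow_le_rpow_of_exponent_le hN1 hab

variable {δ : ℝ}

theorem tendsto_natCast_rpow_neg (hδ : 0 < δ) :
    Tendsto (fun N : ℕ => (N : ℝ) ^ (-δ)) atTop (𝓝 0) :=
  (tendsto_rpow_neg_atTop hδ).comp tendsto_natCast_atTop_atTop

theorem isLittleO_sq_mul_sub_of_hasDerivAt (hδ : 0 < δ) {g : ℝ → ℝ} {v : ℝ}
    (hg : HasDerivAt g v 0) (hg0 : g 0 = 0) :
    (fun N : ℕ => (N : ℝ) ^ 2 * g ((N : ℝ) ^ (-δ)) - (N : ℝ) ^ (2 - δ) * v)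
      =o[atTop] fun N : ℕ => (N : ℝ) ^ (2 - δ) := by
  have hlin : (fun s => g s - s * v) =o[𝓝 0] fun s => s := by
    simpa [hg0] using hasDerivAt_iff_isLittleO_nhds_zero.1 hg
  have hpow : ∀ᶠ N : ℕ in atTop, (N : ℝ) ^ 2 * (N : ℝ) ^ (-δ) = (N : ℝ) ^ (2 - δ) := by
    filter_upwards [eventually_ge_atTop 1] with N hN
    rw [sub_eq_add_neg, Real.rpow_add (by exact_mod_cast hN), Real.rpow_two]
  refine ((isBigO_refl (fun N : ℕ => (N : ℝ) ^ 2) atTop).mul_isLittleO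
    (hlin.comp_tendsto (tendsto_natCast_rpow_neg hδ))).congr' ?_ hpow
  filter_upwards [hpow] with N hN
  simp only [Function.comp, ← hN]
  ring

theorem isLittleO_mul_sub_of_continuousAt (hδ : 0 < δ) {h : ℝ → ℝ} (hh : ContinuousAt h 0) :
    (fun N : ℕ => (N : ℝ) * h ((N : ℝ) ^ (-δ)) - N * h 0) =o[atTop] fun N : ℕ => (N : ℝ) := by
  have hconv : (fun N : ℕ => h ((N : ℝ) ^ (-δ)) - h 0) =o[atTop] fun _ => (1 : ℝ) :=
    (isLittleO_one_iff ℝ).2 <| by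
      simpa using (hh.tendsto.comp (tendsto_natCast_rpow_neg hδ)).sub_const (h 0)
  simpa [mul_sub] using (isBigO_refl (fun N : ℕ => (N : ℝ)) atTop).mul_isLittleO hconv

theorem isLittleO_variance (hδ : 0 < δ) {f₁ f₂ : ℝ → ℝ} {ρ v : ℝ} (hf₁ : ContinuousAt f₁ 0)
    (hf₁0 : f₁ 0 = ρ) (hf₂0 : f₂ 0 = ρ ^ 2) (hg : HasDerivAt (fun s => f₂ s - f₁ s ^ 2) v 0) :
    (fun N : ℕ => (N : ℝ) * (N - 1) * f₂ ((N : ℝ) ^ (-δ)) + N * f₁ ((N : ℝ) ^ (-δ))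
        - (N * f₁ ((N : ℝ) ^ (-δ))) ^ 2 - N * ρ * (1 - ρ) - (N : ℝ) ^ (2 - δ) * v)
      =o[atTop] fun N : ℕ => (N : ℝ) ^ max 1 (2 - δ) := by
  have hquad := isLittleO_sq_mul_sub_of_hasDerivAt hδ hg (by simp [hf₁0, hf₂0])
  have hdiff : ContinuousAt (fun s => f₁ s - f₁ s ^ 2 - (f₂ s - f₁ s ^ 2)) 0 :=
    (hf₁.sub (hf₁.pow 2)).sub hg.continuousAt
  have hlin := isLittleO_mul_sub_of_continuousAt hδ hdiff
  have hle : (fun N : ℕ => (N : ℝ)) =O[atTop] fun N : ℕ => (N : ℝ) ^ max 1 (2 - δ) := by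
    simpa using isBigO_natCast_rpow_of_le (le_max_left (1 : ℝ) (2 - δ))
  refine ((hquad.trans_isBigO (isBigO_natCast_rpow_of_le (le_max_right _ _))).add
    (hlin.trans_isBigO hle)).congr_left fun N => ?_
  simp only [hf₁0, hf₂0]
  ring

end Asymptotics

section ResolventExpansion

variable {n : Type*} [Fintype n] [DecidableEq n]

theorem eventually_isUnit_smul_add (M : Matrix n n ℝ) {S : Matrix n n ℝ} (hS : IsUnit S) :
    ∀ᶠ s in 𝓝 (0 : ℝ), IsUnit (s • M + S) := by
  have hdet : Continuous fun s : ℝ => (s • M + S).det := by fun_prop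
  have h0 : ((0 : ℝ) • M + S).det ≠ 0 := by
    rw [zero_smul, zero_add]; exact ((isUnit_iff_isUnit_det S).1 hS).ne_zero
  filter_upwards [hdet.continuousAt.eventually_ne h0] with s hs
  exact (isUnit_iff_isUnit_det _).2 (isUnit_iff_ne_zero.2 hs)

theorem eventually_inv_smul_diagonal_sub_rpow_smul {Q : Matrix n n ℝ} {π γ : n → ℝ}
    (hQ1 : Q *ᵥ 1 = 0) (hS : IsUnit (vecMulVec γ π - Q)) {δ : ℝ} (hδ : 0 < δ) {c : ℝ}
    (hc : c ≠ 0) :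
    ∀ᶠ N : ℕ in atTop, (c • diagonal γ - (N : ℝ) ^ δ • Q)⁻¹
      = c⁻¹ • scaledResolvent Q π γ (c * (N : ℝ) ^ (-δ)) := by
  have hlim : Tendsto (fun N : ℕ => c * (N : ℝ) ^ (-δ)) atTop (𝓝 0) := by
    simpa using (tendsto_natCast_rpow_neg hδ).const_mul c
  filter_upwards [hlim.eventually (eventually_isUnit_smul_add (diagonal γ) hS),
    eventually_ge_atTop 1] with N hU hN
  rw [Real.rpow_neg (Nat.cast_nonneg N)] at hU ⊢
  exact inv_smul_diagonal_sub_smul hQ1 hc (Real.rpow_pos_of_pos (by exact_mod_cast hN) δ).ne' hU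

attribute [local instance] Matrix.linftyOpNormedRing Matrix.linftyOpNormedAlgebra

theorem hasDerivAt_inv_smul_add (M : Matrix n n ℝ) {S : Matrix n n ℝ} (hS : IsUnit S) :
    HasDerivAt (fun s : ℝ => (s • M + S)⁻¹) (-(S⁻¹ * M * S⁻¹)) 0 := by
  have hU : HasDerivAt (fun s : ℝ => s • M + S) M 0 :=
    (((hasDerivAt_id (0 : ℝ)).smul_const M).add_const S).congr_deriv (one_smul ℝ M)
  have hinv : HasFDerivAt Ring.inverse
      (-ContinuousLinearMap.mulLeftRight ℝ (Matrix n n ℝ) S⁻¹ S⁻¹) ((0 : ℝ) • M + S) := by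
    have h := hasFDerivAt_ringInverse (𝕜 := ℝ) hS.unit
    rw [zero_smul, zero_add]
    rwa [coe_units_inv, hS.unit_spec] at h
  have hfun : (fun s : ℝ => (s • M + S)⁻¹) = Ring.inverse ∘ fun s : ℝ => s • M + S :=
    funext fun s => nonsing_inv_eq_ringInverse _
  rw [hfun]
  exact (hinv.comp_hasDerivAt (0 : ℝ) hU).congr_deriv (by simp [Matrix.mul_assoc])

theorem hasDerivAt_scaledResolvent_zero {Q : Matrix n n ℝ} {π γ : n → ℝ}
    (hS : IsUnit (vecMulVec γ π - Q)) :
    HasDerivAt (scaledResolvent Q π γ) ((vecMulVec γ π - Q)⁻¹ -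
      vecMulVec 1 π * ((vecMulVec γ π - Q)⁻¹ * diagonal γ * (vecMulVec γ π - Q)⁻¹)) 0 := by
  have hA : HasDerivAt (fun s : ℝ => s • (1 : Matrix n n ℝ) + vecMulVec 1 π) 1 0 :=
    (((hasDerivAt_id (0 : ℝ)).smul_const (1 : Matrix n n ℝ)).add_const
      (vecMulVec 1 π)).congr_deriv (one_smul ℝ 1)
  exact (hA.mul (hasDerivAt_inv_smul_add (diagonal γ) hS)).congr_deriv
    (by simp [sub_eq_add_neg])

theorem HasDerivAt.vecMul_dotProduct {M : ℝ → Matrix n n ℝ} {M' : Matrix n n ℝ} {x : ℝ}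
    (hM : HasDerivAt M M' x) (p q : n → ℝ) :
    HasDerivAt (fun s => p ᵥ* M s ⬝ᵥ q) (p ᵥ* M' ⬝ᵥ q) x := by
  let L : Matrix n n ℝ →ₗ[ℝ] ℝ :=
    { toFun := fun A => p ᵥ* A ⬝ᵥ q
      map_add' := fun A B => by rw [vecMul_add, add_dotProduct]
      map_smul' := fun c A => by rw [vecMul_smul, smul_dotProduct, RingHom.id_apply] }
  exact L.toContinuousLinearMap.hasFDerivAt.comp_hasDerivAt x hM

/-- With `R = scaledResolvent Q π γ`, `m₁(N) = N · firstMomentCoeff R π lam (N^{-δ})`. -/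
noncomputable def firstMomentCoeff (R : ℝ → Matrix n n ℝ) (π lam : n → ℝ) (s : ℝ) : ℝ :=
  π ᵥ* (diagonal lam * R s) ⬝ᵥ 1

/-- With `R = scaledResolvent Q π γ`, `m₂(N) = N (N - 1) · secondMomentCoeff R π lam (N^{-δ})`. -/
noncomputable def secondMomentCoeff (R : ℝ → Matrix n n ℝ) (π lam : n → ℝ) (s : ℝ) : ℝ :=
  π ᵥ* (diagonal lam * R s * diagonal lam * R (2 * s)) ⬝ᵥ 1

variable {R : ℝ → Matrix n n ℝ} {π lam : n → ℝ} {c : ℝ}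

theorem firstMomentCoeff_zero (hπ1 : π ⬝ᵥ 1 = 1) (hR : R 0 = c • vecMulVec 1 π) :
    firstMomentCoeff R π lam 0 = c * (π ⬝ᵥ lam) := by
  simp only [firstMomentCoeff, hR, Matrix.mul_smul, vecMul_smul, smul_dotProduct, mul_vecMulVec,
    vecMul_vecMulVec, diagonal_mulVec_one, smul_eq_mul, hπ1, mul_one]

theorem secondMomentCoeff_zero (hπ1 : π ⬝ᵥ 1 = 1) (hR : R 0 = c • vecMulVec 1 π) :
    secondMomentCoeff R π lam 0 = (c * (π ⬝ᵥ lam)) ^ 2 := by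
  simp only [secondMomentCoeff, mul_zero, hR, Matrix.mul_smul, Matrix.smul_mul, vecMul_smul,
    smul_dotProduct, mul_vecMulVec, vecMul_vecMulVec, vecMulVec_mul, diagonal_mulVec_one,
    smul_eq_mul, hπ1, mul_one, smul_mulVec, vecMulVec_mulVec, op_smul_eq_smul, dotProduct_smul,
    vecMul_diagonal_dotProduct_one]
  ring

theorem hasDerivAt_firstMomentCoeff {R' : Matrix n n ℝ} (hR' : HasDerivAt R R' 0) :
    HasDerivAt (firstMomentCoeff R π lam) (π ᵥ* (diagonal lam * R') ⬝ᵥ 1) 0 :=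
  (hR'.const_mul (diagonal lam)).vecMul_dotProduct π 1

theorem hasDerivAt_secondMomentCoeff_sub_sq (hπ1 : π ⬝ᵥ 1 = 1) (hR : R 0 = c • vecMulVec 1 π)
    {R' : Matrix n n ℝ} (hR' : HasDerivAt R R' 0) :
    HasDerivAt (fun s => secondMomentCoeff R π lam s - firstMomentCoeff R π lam s ^ 2)
      (c * (π ᵥ* diagonal lam ᵥ* R' ⬝ᵥ lam)) 0 := by
  have hR2 : HasDerivAt (fun s : ℝ => R (2 * s)) ((2 : ℝ) • R') 0 := by
    have h := (mul_zero (2 : ℝ)).symm ▸ hR'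
    exact (h.scomp (0 : ℝ) ((hasDerivAt_id (0 : ℝ)).const_mul 2)).congr_deriv (by simp)
  have hsecond :=
    (((hR'.const_mul (diagonal lam)).mul_const (diagonal lam)).mul hR2).vecMul_dotProduct π 1
  refine (hsecond.sub ((hasDerivAt_firstMomentCoeff hR').pow 2)).congr_deriv ?_
  simp only [firstMomentCoeff_zero hπ1 hR, mul_zero, hR, Matrix.mul_smul, Matrix.smul_mul,
    vecMul_smul, smul_dotProduct, mul_vecMulVec, vecMul_vecMulVec, vecMulVec_mul,
    diagonal_mulVec_one, smul_eq_mul, hπ1, mul_one, vecMul_diagonal_dotProduct_one, vecMul_add,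
    add_dotProduct, ← vecMul_vecMul, dotProduct_mulVec]
  push_cast
  ring

end ResolventExpansion

theorem stmt_12_general
    (d : ℕ)
    (Q : Matrix (Fin d) (Fin d) ℝ) (π lam mu : Fin d → ℝ)
    (hrker : ∀ v : Fin d → ℝ, Q.mulVec v = 0 ↔ ∃ c : ℝ, v = c • (1 : Fin d → ℝ))
    (hlker : ∀ w : Fin d → ℝ, Q.vecMul w = 0 ↔ ∃ c : ℝ, w = c • π)
    (hπpos : ∀ i, 0 < π i) (hπsum : ∑ i, π i = 1)
    (hγpos : ∀ i, 0 < lam i + mu i)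
    (δ : ℝ) (hδ : 0 < δ) :
    (fun N : ℕ =>
        ((2 * (N : ℝ) * ((N : ℝ) - 1) *
            (Matrix.vecMul π
              (Matrix.diagonal lam *
                  (Matrix.diagonal (fun i => lam i + mu i) - ((N : ℝ) ^ δ) • Q)⁻¹ *
                Matrix.diagonal lam *
                  ((2 : ℝ) • Matrix.diagonal (fun i => lam i + mu i) - ((N : ℝ) ^ δ) • Q)⁻¹) ⬝ᵥ 1))
          + ((N : ℝ) *
              (Matrix.vecMul π
                (Matrix.diagonal lam *
                  (Matrix.diagonal (fun i => lam i + mu i) - ((N : ℝ) ^ δ) • Q)⁻¹) ⬝ᵥ 1))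
          - ((N : ℝ) *
              (Matrix.vecMul π
                (Matrix.diagonal lam *
                  (Matrix.diagonal (fun i => lam i + mu i) - ((N : ℝ) ^ δ) • Q)⁻¹) ⬝ᵥ 1)) ^ 2)
        - (N : ℝ) * ((π ⬝ᵥ lam) / (π ⬝ᵥ (lam + mu))) * (1 - (π ⬝ᵥ lam) / (π ⬝ᵥ (lam + mu)))
        - (N : ℝ) ^ ((2 : ℝ) - δ) *
            ((1 / (π ⬝ᵥ (lam + mu))) *
              (Matrix.vecMul π
                ((Matrix.diagonal lam -
                    ((π ⬝ᵥ lam) / (π ⬝ᵥ (lam + mu))) •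
                      Matrix.diagonal (fun i => lam i + mu i)) *
                  ((vecMulVec 1 π - Q)⁻¹ - vecMulVec 1 π) *
                  (Matrix.diagonal lam -
                    ((π ⬝ᵥ lam) / (π ⬝ᵥ (lam + mu))) •
                      Matrix.diagonal (fun i => lam i + mu i))) ⬝ᵥ 1)))
      =o[atTop] (fun N : ℕ => (N : ℝ) ^ (max (1 : ℝ) (2 - δ))) := by
  set γ : Fin d → ℝ := fun i => lam i + mu i
  have hγ_def : π ⬝ᵥ (lam + mu) = π ⬝ᵥ γ := rfl
  rw [hγ_def]
  have hπ1 : π ⬝ᵥ 1 = 1 := by simpa [dotProduct] using hπsum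
  have hπQ : π ᵥ* Q = 0 := (hlker π).2 ⟨1, (one_smul ℝ π).symm⟩
  have hQ1 : Q *ᵥ 1 = 0 := (hrker 1).2 ⟨1, (one_smul ℝ 1).symm⟩
  have hker : ∀ v, Q *ᵥ v = 0 → ∃ c : ℝ, v = c • 1 := fun v => (hrker v).1
  have hγ : 0 < π ⬝ᵥ γ := Finset.sum_pos (fun i _ => mul_pos (hπpos i) (hγpos i))
    (Finset.nonempty_of_sum_ne_zero (hπsum ▸ one_ne_zero))
  have hS := isUnit_vecMulVec_sub hker hπQ (hπ1 ▸ one_ne_zero) hγ.ne'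
  have hR0 := scaledResolvent_zero hπQ hγ.ne' hS
  have hR' := hasDerivAt_scaledResolvent_zero hS
  have hg := hasDerivAt_secondMomentCoeff_sub_sq (lam := lam) hπ1 hR0 hR'
  rw [vecMul_diagonal_vecMul_dotProduct_eq_deviation hker hπQ hQ1 hπ1 hγ.ne'] at hg
  refine (isLittleO_variance hδ (hasDerivAt_firstMomentCoeff hR').continuousAt
    (firstMomentCoeff_zero hπ1 hR0) (secondMomentCoeff_zero hπ1 hR0) hg).congr' ?_ .rfl
  filter_upwards [eventually_inv_smul_diagonal_sub_rpow_smul hQ1 hS hδ one_ne_zero,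
    eventually_inv_smul_diagonal_sub_rpow_smul hQ1 hS hδ two_ne_zero] with N h1 h2
  rw [one_smul, inv_one, one_smul, one_mul] at h1
  rw [h1, h2]
  simp only [firstMomentCoeff, secondMomentCoeff, Matrix.mul_smul, vecMul_smul, smul_dotProduct,
    smul_eq_mul, one_div]
  ring

/-- With `m₁(N) := N·πᵀΛ(Γ − N^δQ)⁻¹𝟏`,
`m₂(N) := 2N(N−1)·πᵀΛ(Γ − N^δQ)⁻¹Λ(2Γ − N^δQ)⁻¹𝟏` and `V(N) := m₂(N) + m₁(N) − m₁(N)²`,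
as `N → ∞` one has `V(N) = N·ρ̄(1−ρ̄) + N^{2−δ}·v + o(N^{max{1,2−δ}})`, where
`v := (1/γ⋆)·πᵀ(Λ − ρ̄Γ)D(Λ − ρ̄Γ)𝟏`. -/
theorem stmt_12
    (d : ℕ) (hd : 2 ≤ d)
    (Q : Matrix (Fin d) (Fin d) ℝ) (π lam mu : Fin d → ℝ)
    (hQoff : ∀ i j, i ≠ j → 0 ≤ Q i j)
    (hQrow : ∀ i, ∑ j, Q i j = 0)
    (hrker : ∀ v : Fin d → ℝ, Q.mulVec v = 0 ↔ ∃ c : ℝ, v = c • (1 : Fin d → ℝ))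
    (hlker : ∀ w : Fin d → ℝ, Q.vecMul w = 0 ↔ ∃ c : ℝ, w = c • π)
    (hπpos : ∀ i, 0 < π i) (hπsum : ∑ i, π i = 1)
    (hlam : ∀ i, 0 ≤ lam i) (hmu : ∀ i, 0 ≤ mu i)
    (hγpos : ∀ i, 0 < lam i + mu i)
    (hinv : IsUnit (vecMulVec 1 π - Q))
    (δ : ℝ) (hδ : 0 < δ) :
    (fun N : ℕ =>
        ((2 * (N : ℝ) * ((N : ℝ) - 1) *
            (Matrix.vecMul π
              (Matrix.diagonal lam *
                  (Matrix.diagonal (fun i => lam i + mu i) - ((N : ℝ) ^ δ) • Q)⁻¹ *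
                Matrix.diagonal lam *
                  ((2 : ℝ) • Matrix.diagonal (fun i => lam i + mu i) - ((N : ℝ) ^ δ) • Q)⁻¹) ⬝ᵥ 1))
          + ((N : ℝ) *
              (Matrix.vecMul π
                (Matrix.diagonal lam *
                  (Matrix.diagonal (fun i => lam i + mu i) - ((N : ℝ) ^ δ) • Q)⁻¹) ⬝ᵥ 1))
          - ((N : ℝ) *
              (Matrix.vecMul π
                (Matrix.diagonal lam *
                  (Matrix.diagonal (fun i => lam i + mu i) - ((N : ℝ) ^ δ) • Q)⁻¹) ⬝ᵥ 1)) ^ 2)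
        - (N : ℝ) * ((π ⬝ᵥ lam) / (π ⬝ᵥ (lam + mu))) * (1 - (π ⬝ᵥ lam) / (π ⬝ᵥ (lam + mu)))
        - (N : ℝ) ^ ((2 : ℝ) - δ) *
            ((1 / (π ⬝ᵥ (lam + mu))) *
              (Matrix.vecMul π
                ((Matrix.diagonal lam -
                    ((π ⬝ᵥ lam) / (π ⬝ᵥ (lam + mu))) •
                      Matrix.diagonal (fun i => lam i + mu i)) *
                  ((vecMulVec 1 π - Q)⁻¹ - vecMulVec 1 π) *
                  (Matrix.diagonal lam -
                    ((π ⬝ᵥ lam) / (π ⬝ᵥ (lam + mu))) •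
                      Matrix.diagonal (fun i => lam i + mu i))) ⬝ᵥ 1)))
      =o[atTop] (fun N : ℕ => (N : ℝ) ^ (max (1 : ℝ) (2 - δ))) :=
  stmt_12_general d Q π lam mu hrker hlker hπpos hπsum hγpos δ hδ
end

section
/- Fix N ∈ ℕ. Let Y₀ be a random variable with values in {0,…,N}, independent of (P,R), and let Y₁ be a random variable whose conditional distribution given (Y₀, P, R) = (k, p, r) is that of B₁ + B₂ with B₁, B₂ independent, B₁ ~ Binomial(k, r), B₂ ~ Binomial(N−k, 1−p). Assume Y₁ has the same distribution as Y₀ (stationarity). Then the probability generating function φ(z) := E[z^{Y₀}] satisfies, for every z ≥ 0, the fixed-point equation φ(z) = E[ ((1−P)z + P)^{N} · φ( (Rz + 1−R) / ((1−P)z + P) ) ]. -/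
open MeasureTheory ProbabilityTheory

/-- The probability mass function of the binomial distribution with `n` trials and success
probability `q`, evaluated at `j`. -/
noncomputable def binomPMF (n : ℕ) (q : ℝ) (j : ℕ) : ℝ :=
  (n.choose j : ℝ) * q ^ j * (1 - q) ^ (n - j)

/-- The pmf at `m` of `B₁ + B₂` with `B₁ ~ Binomial(k, r)` and `B₂ ~ Binomial(N − k, 1 − p)`
independent. -/
noncomputable def convPMF (N k : ℕ) (p r : ℝ) (m : ℕ) : ℝ :=
  ∑ j ∈ Finset.range (m + 1), binomPMF k r j * binomPMF (N - k) (1 - p) (m - j)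

/-!
Given `(Y₀, P, R) = (k, p, r)`, `Y₁` is a sum of independent binomials, so its conditional
generating function is `(r z + 1 - r)^k ((1 - p) z + p)^(N - k)`. Stationarity replaces
`E[z^{Y₀}]` by `E[z^{Y₁}]`, the expectation of this conditional generating function. Since `Y₀` is
independent of `(P, R)`, one may average over `Y₀` with `(P, R)` frozen; pulling out
`((1 - p) z + p)^N` leaves `E[(A/g)^{Y₀}] = φ(A/g)` with `A = r z + 1 - r`, `g = (1 - p) z + p`.
-/

open Finset

lemma binomPMF_eq_zero_of_lt {n j : ℕ} (h : n < j) (q : ℝ) : binomPMF n q j = 0 := by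
  simp [binomPMF, Nat.choose_eq_zero_of_lt h]

lemma binomPMF_nonneg {q : ℝ} (hq₀ : 0 ≤ q) (hq₁ : q ≤ 1) (n j : ℕ) : 0 ≤ binomPMF n q j := by
  have : 0 ≤ 1 - q := by linarith
  unfold binomPMF; positivity

lemma sum_binomPMF_mul_pow (n : ℕ) (q z : ℝ) :
    ∑ j ∈ range (n + 1), binomPMF n q j * z ^ j = (q * z + 1 - q) ^ n := by
  rw [add_sub_assoc, add_pow]
  refine sum_congr rfl fun j _ => ?_
  simp only [binomPMF, mul_pow]
  ring

lemma sum_range_convolution_eq_mul {R : Type*} [CommSemiring R] {a b : ℕ → R} {K L : ℕ}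
    (ha : ∀ j, K < j → a j = 0) (hb : ∀ i, L < i → b i = 0) :
    ∑ m ∈ range (K + L + 1), ∑ j ∈ range (m + 1), a j * b (m - j)
      = (∑ j ∈ range (K + 1), a j) * ∑ i ∈ range (L + 1), b i := by
  have hsum_b : ∀ j ∈ range (K + L + 1),
      a j * ∑ i ∈ range (K + L + 1 - j), b i = a j * ∑ i ∈ range (L + 1), b i := by
    intro j _
    rcases le_or_gt j K with hj | hj
    · rw [eventually_constant_sum (fun i hi => hb i hi) (by omega)]
    · simp [ha j hj]
  rw [sum_range_diag_flip _ fun j i => a j * b i, sum_congr rfl fun j _ => (mul_sum ..).symm, sum_congr rfl hsum_b,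
    ← sum_mul, eventually_constant_sum (fun j hj => ha j hj) (by omega)]

/-- The conditional generating function `E[z^{Y₁} | Y₀ = k, P = p, R = r]`. -/
noncomputable def condPGF (N k : ℕ) (z p r : ℝ) : ℝ :=
  (r * z + 1 - r) ^ k * ((1 - p) * z + p) ^ (N - k)

lemma sum_pow_mul_convPMF {N k : ℕ} (hk : k ≤ N) (z p r : ℝ) :
    ∑ m ∈ range (N + 1), z ^ m * convPMF N k p r m = condPGF N k z p r := by
  have hsplit : ∀ m ∈ range (N + 1), z ^ m * convPMF N k p r m
      = ∑ j ∈ range (m + 1), (binomPMF k r j * z ^ j)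
          * (binomPMF (N - k) (1 - p) (m - j) * z ^ (m - j)) := by
    intro m _
    rw [convPMF, mul_sum]
    refine sum_congr rfl fun j hj => ?_
    rw [← pow_mul_pow_sub z (Nat.lt_succ_iff.1 (mem_range.1 hj))]
    ring
  have hN : N + 1 = k + (N - k) + 1 := by omega
  rw [sum_congr rfl hsplit, hN, sum_range_convolution_eq_mul
      (a := fun j => binomPMF k r j * z ^ j) (b := fun i => binomPMF (N - k) (1 - p) i * z ^ i)
      (fun j hj => by simp [binomPMF_eq_zero_of_lt hj])
      (fun i hi => by simp [binomPMF_eq_zero_of_lt hi]),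
    sum_binomPMF_mul_pow, sum_binomPMF_mul_pow, condPGF]
  ring

lemma convPMF_nonneg {p r : ℝ} (hp₀ : 0 ≤ p) (hp₁ : p ≤ 1) (hr₀ : 0 ≤ r) (hr₁ : r ≤ 1)
    (N k m : ℕ) : 0 ≤ convPMF N k p r m :=
  sum_nonneg fun _ _ => mul_nonneg (binomPMF_nonneg hr₀ hr₁ _ _)
    (binomPMF_nonneg (by linarith) (by linarith) _ _)

lemma convPMF_le_one {p r : ℝ} (hp₀ : 0 ≤ p) (hp₁ : p ≤ 1) (hr₀ : 0 ≤ r) (hr₁ : r ≤ 1)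
    {N k m : ℕ} (hk : k ≤ N) (hm : m ≤ N) : convPMF N k p r m ≤ 1 := by
  have htotal := sum_pow_mul_convPMF hk 1 p r
  simp only [one_pow, one_mul, condPGF, mul_one, sub_add_cancel, add_sub_cancel_left] at htotal
  rw [← htotal]
  exact single_le_sum (fun m _ => convPMF_nonneg hp₀ hp₁ hr₀ hr₁ N k m)
    (mem_range.2 (Nat.lt_succ_of_le hm))

lemma mul_add_one_sub_mem_Icc {t z : ℝ} (ht₀ : 0 ≤ t) (ht₁ : t ≤ 1) (hz : 0 ≤ z) :
    t * z + 1 - t ∈ Set.Icc 0 (z + 1) :=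
  ⟨by nlinarith, by nlinarith⟩

lemma condPGF_nonneg_and_le {z p r : ℝ} (hz : 0 ≤ z) (hp : p ∈ Set.Icc (0 : ℝ) 1)
    (hr : r ∈ Set.Icc (0 : ℝ) 1) {N k : ℕ} (hk : k ≤ N) :
    0 ≤ condPGF N k z p r ∧ condPGF N k z p r ≤ (z + 1) ^ N := by
  have hA := mul_add_one_sub_mem_Icc hr.1 hr.2 hz
  have hg : (1 - p) * z + p ∈ Set.Icc 0 (z + 1) := by
    convert mul_add_one_sub_mem_Icc (t := 1 - p) (by linarith [hp.2]) (by linarith [hp.1]) hz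
      using 1
    ring
  refine ⟨mul_nonneg (pow_nonneg hA.1 _) (pow_nonneg hg.1 _), ?_⟩
  rw [← pow_mul_pow_sub (z + 1) hk]
  exact mul_le_mul (pow_le_pow_left₀ hA.1 hA.2 k) (pow_le_pow_left₀ hg.1 hg.2 _)
    (pow_nonneg hg.1 _) (by positivity)

lemma pow_mul_div_pow_eq_condPGF {z p r : ℝ} (hg : (1 - p) * z + p ≠ 0) {N k : ℕ} (hk : k ≤ N) :
    ((1 - p) * z + p) ^ N * ((r * z + 1 - r) / ((1 - p) * z + p)) ^ k = condPGF N k z p r := by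
  rw [condPGF, div_pow, ← pow_sub_mul_pow _ hk]
  field_simp

lemma measurable_apply_nat {Ω β γ : Type*} [MeasurableSpace Ω] [MeasurableSpace β]
    [MeasurableSpace γ] {Y : Ω → ℕ} {X : Ω → β} {F : ℕ → β → γ} (hY : Measurable Y)
    (hX : Measurable X) (hF : ∀ k, Measurable (F k)) :
    Measurable fun ω => F (Y ω) (X ω) :=
  (measurable_from_prod_countable_left (f := fun q : β × ℕ => F q.2 q.1) hF).comp (hX.prodMk hY)

section NatValued

variable {Ω : Type*} [MeasurableSpace Ω] {μ : Measure Ω} {Y : Ω → ℕ} {N : ℕ}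

lemma integral_eq_sum_setIntegral_of_le (hY : Measurable Y) (hYN : ∀ᵐ ω ∂μ, Y ω ≤ N)
    {G : ℕ → Ω → ℝ} (hG : ∀ k ≤ N, Integrable (G k) μ) :
    ∫ ω, G (Y ω) ω ∂μ = ∑ k ∈ range (N + 1), ∫ ω in {ω | Y ω = k}, G k ω ∂μ := by
  have hmeas : ∀ k, MeasurableSet {ω | Y ω = k} := fun k => hY (measurableSet_singleton k)
  have hpoint : ∀ᵐ ω ∂μ, G (Y ω) ω = ∑ k ∈ range (N + 1), {ω | Y ω = k}.indicator (G k) ω := by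
    filter_upwards [hYN] with ω hω
    simp only [Set.indicator_apply, Set.mem_ofPred_eq, sum_ite_eq,
      mem_range.2 (Nat.lt_succ_of_le hω), if_true]
  rw [integral_congr_ae hpoint, integral_finsetSum _ fun k hk =>
    (hG k (Nat.lt_succ_iff.1 (mem_range.1 hk))).indicator (hmeas k)]
  exact sum_congr rfl fun k _ => integral_indicator (hmeas k)

lemma integral_comp_eq_sum_of_le [IsFiniteMeasure μ] (hY : Measurable Y)
    (hYN : ∀ᵐ ω ∂μ, Y ω ≤ N) (f : ℕ → ℝ) :
    ∫ ω, f (Y ω) ∂μ = ∑ k ∈ range (N + 1), μ.real {ω | Y ω = k} * f k := by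
  rw [integral_eq_sum_setIntegral_of_le (G := fun k _ => f k) hY hYN
    fun k _ => integrable_const (f k)]
  simp only [setIntegral_const, smul_eq_mul]

lemma ProbabilityTheory.IndepFun.integral_comp_eq_sum_of_le {β : Type*} [MeasurableSpace β]
    {X : Ω → β} (hind : IndepFun Y X μ) (hY : Measurable Y) (hX : AEMeasurable X μ)
    (hYN : ∀ᵐ ω ∂μ, Y ω ≤ N) {F : ℕ → β → ℝ} (hFm : ∀ k, Measurable (F k))
    (hF : ∀ k ≤ N, Integrable (fun ω => F k (X ω)) μ) :
    ∫ ω, F (Y ω) (X ω) ∂μ = ∑ k ∈ range (N + 1), μ.real {ω | Y ω = k} * ∫ ω, F k (X ω) ∂μ := by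
  rw [integral_eq_sum_setIntegral_of_le (G := fun k ω => F k (X ω)) hY hYN hF]
  exact sum_congr rfl fun k _ => ((IndepFun_iff_Indep Y X μ).1 hind).setIntegral_eq_mul
    hY.comap_le hX ⟨{k}, measurableSet_singleton k, rfl⟩ (hFm k).aestronglyMeasurable

end NatValued

section ResamplingModel

variable {Ω : Type*} [MeasurableSpace Ω] {μ : Measure Ω} [IsFiniteMeasure μ] {P R : Ω → ℝ}
  {N : ℕ}

lemma integrable_condPGF (hP : Measurable P) (hR : Measurable R)
    (hPR : ∀ᵐ ω ∂μ, P ω ∈ Set.Icc (0 : ℝ) 1 ∧ R ω ∈ Set.Icc (0 : ℝ) 1) {z : ℝ} (hz : 0 ≤ z)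
    {k : ℕ} (hk : k ≤ N) : Integrable (fun ω => condPGF N k z (P ω) (R ω)) μ := by
  refine Integrable.of_bound (by unfold condPGF; fun_prop) ((z + 1) ^ N) ?_
  filter_upwards [hPR] with ω ⟨hp, hr⟩
  obtain ⟨h₀, h₁⟩ := condPGF_nonneg_and_le hz hp hr hk
  rwa [Real.norm_of_nonneg h₀]

lemma integral_pow_eq_integral_condPGF (hP : Measurable P) (hR : Measurable R)
    (hPR : ∀ᵐ ω ∂μ, P ω ∈ Set.Icc (0 : ℝ) 1 ∧ R ω ∈ Set.Icc (0 : ℝ) 1) {Y₀ Y₁ : Ω → ℕ}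
    (hY₀ : Measurable Y₀) (hY₀N : ∀ᵐ ω ∂μ, Y₀ ω ≤ N) (hY₁ : Measurable Y₁)
    (hY₁N : ∀ᵐ ω ∂μ, Y₁ ω ≤ N)
    (hlaw : ∀ m, μ.real {ω | Y₁ ω = m} = ∫ ω, convPMF N (Y₀ ω) (P ω) (R ω) m ∂μ) (z : ℝ) :
    ∫ ω, z ^ Y₁ ω ∂μ = ∫ ω, condPGF N (Y₀ ω) z (P ω) (R ω) ∂μ := by
  have hint : ∀ m ≤ N, Integrable (fun ω => convPMF N (Y₀ ω) (P ω) (R ω) m) μ := by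
    intro m hm
    have hmeas := measurable_apply_nat hY₀ (hP.prodMk hR)
      (F := fun k x => convPMF N k x.1 x.2 m) fun k => by unfold convPMF binomPMF; fun_prop
    refine Integrable.of_bound hmeas.aestronglyMeasurable 1 ?_
    filter_upwards [hPR, hY₀N] with ω ⟨⟨hp₀, hp₁⟩, hr₀, hr₁⟩ hk
    rw [Real.norm_of_nonneg (convPMF_nonneg hp₀ hp₁ hr₀ hr₁ ..)]
    exact convPMF_le_one hp₀ hp₁ hr₀ hr₁ hk hm
  calc ∫ ω, z ^ Y₁ ω ∂μ = ∑ m ∈ range (N + 1), μ.real {ω | Y₁ ω = m} * z ^ m :=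
        integral_comp_eq_sum_of_le hY₁ hY₁N _
    _ = ∑ m ∈ range (N + 1), ∫ ω, z ^ m * convPMF N (Y₀ ω) (P ω) (R ω) m ∂μ :=
        sum_congr rfl fun m _ => by rw [hlaw, integral_const_mul, mul_comm]
    _ = ∫ ω, ∑ m ∈ range (N + 1), z ^ m * convPMF N (Y₀ ω) (P ω) (R ω) m ∂μ :=
        (integral_finsetSum _ fun m hm =>
          (hint m (Nat.lt_succ_iff.1 (mem_range.1 hm))).const_mul _).symm
    _ = ∫ ω, condPGF N (Y₀ ω) z (P ω) (R ω) ∂μ := by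
        refine integral_congr_ae ?_
        filter_upwards [hY₀N] with ω hk using sum_pow_mul_convPMF hk _ _ _

lemma integral_pow_mul_pgf_eq_sum (hP : Measurable P) (hR : Measurable R)
    (hPR : ∀ᵐ ω ∂μ, P ω ∈ Set.Icc (0 : ℝ) 1 ∧ R ω ∈ Set.Icc (0 : ℝ) 1)
    (hP_pos : ∀ᵐ ω ∂μ, 0 < P ω) {Y : Ω → ℕ}
    (hY : Measurable Y) (hYN : ∀ᵐ ω ∂μ, Y ω ≤ N) {z : ℝ} (hz : 0 ≤ z) :
    ∫ ω, ((1 - P ω) * z + P ω) ^ N *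
        (∫ ω', ((R ω * z + 1 - R ω) / ((1 - P ω) * z + P ω)) ^ Y ω' ∂μ) ∂μ
      = ∑ k ∈ range (N + 1), μ.real {ω | Y ω = k} * ∫ ω, condPGF N k z (P ω) (R ω) ∂μ := by
  calc _ = ∫ ω, ∑ k ∈ range (N + 1), μ.real {ω | Y ω = k} * condPGF N k z (P ω) (R ω) ∂μ := by
        refine integral_congr_ae ?_
        filter_upwards [hPR, hP_pos] with ω ⟨⟨_, hp₁⟩, _⟩ hp₀
        have hg : (1 - P ω) * z + P ω ≠ 0 := by nlinarith
        rw [integral_comp_eq_sum_of_le hY hYN, mul_sum]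
        refine sum_congr rfl fun k hk => ?_
        rw [mul_left_comm, pow_mul_div_pow_eq_condPGF hg (Nat.lt_succ_iff.1 (mem_range.1 hk))]
    _ = _ := by
        rw [integral_finsetSum _ fun k hk =>
          (integrable_condPGF hP hR hPR hz (Nat.lt_succ_iff.1 (mem_range.1 hk))).const_mul _]
        simp only [integral_const_mul]

end ResamplingModel

/-- In the stationary resampling model, the probability generating function
`φ(z) := E[z^{Y₀}]` satisfies, for every `z ≥ 0`,
`φ(z) = E[((1−P)z + P)^N · φ((Rz + 1−R)/((1−P)z + P))]`. -/
theorem stmt_15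
    {Ω : Type*} [MeasurableSpace Ω] (μ : Measure Ω) [IsProbabilityMeasure μ]
    (P R : Ω → ℝ) (hP : Measurable P) (hR : Measurable R)
    (hPR : ∀ᵐ ω ∂μ, P ω ∈ Set.Ioo (0 : ℝ) 1 ∧ R ω ∈ Set.Ioo (0 : ℝ) 1)
    (N : ℕ) (Y₀ Y₁ : Ω → ℕ) (hY₀ : Measurable Y₀) (hY₁ : Measurable Y₁)
    (hY₀N : ∀ ω, Y₀ ω ≤ N)
    (hindep : IndepFun Y₀ (fun ω => (P ω, R ω)) μ)
    (hcond : ∀ (m : ℕ) (s : Set (ℕ × ℝ × ℝ)), MeasurableSet s →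
      (μ {ω | Y₁ ω = m ∧ (Y₀ ω, P ω, R ω) ∈ s}).toReal
        = ∫ ω in {ω | (Y₀ ω, P ω, R ω) ∈ s}, convPMF N (Y₀ ω) (P ω) (R ω) m ∂μ)
    (hstat : Measure.map Y₁ μ = Measure.map Y₀ μ) :
    ∀ z : ℝ, 0 ≤ z →
      (∫ ω, z ^ Y₀ ω ∂μ)
        = ∫ ω, ((1 - P ω) * z + P ω) ^ N *
            (∫ ω', ((R ω * z + 1 - R ω) / ((1 - P ω) * z + P ω)) ^ Y₀ ω' ∂μ) ∂μ := by
  intro z hz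
  have hPR_Icc : ∀ᵐ ω ∂μ, P ω ∈ Set.Icc (0 : ℝ) 1 ∧ R ω ∈ Set.Icc (0 : ℝ) 1 := by
    filter_upwards [hPR] with ω ⟨hp, hr⟩
    exact ⟨Set.Ioo_subset_Icc_self hp, Set.Ioo_subset_Icc_self hr⟩
  have hident : IdentDistrib Y₀ Y₁ μ μ := ⟨hY₀.aemeasurable, hY₁.aemeasurable, hstat.symm⟩
  have hY₀N' : ∀ᵐ ω ∂μ, Y₀ ω ≤ N := .of_forall hY₀N
  have hY₁N : ∀ᵐ ω ∂μ, Y₁ ω ≤ N :=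
    hident.ae_snd (p := (· ≤ N)) (Set.to_countable _).measurableSet hY₀N'
  have hlaw : ∀ m, μ.real {ω | Y₁ ω = m} = ∫ ω, convPMF N (Y₀ ω) (P ω) (R ω) m ∂μ := by
    intro m
    simpa [measureReal_def] using hcond m Set.univ .univ
  calc ∫ ω, z ^ Y₀ ω ∂μ = ∫ ω, z ^ Y₁ ω ∂μ :=
        (hident.comp (measurable_from_top (f := (z ^ ·)))).integral_eq
    _ = ∫ ω, condPGF N (Y₀ ω) z (P ω) (R ω) ∂μ :=
        integral_pow_eq_integral_condPGF hP hR hPR_Icc hY₀ hY₀N' hY₁ hY₁N hlaw z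
    _ = ∑ k ∈ range (N + 1), μ.real {ω | Y₀ ω = k} * ∫ ω, condPGF N k z (P ω) (R ω) ∂μ :=
        hindep.integral_comp_eq_sum_of_le (F := fun k x => condPGF N k z x.1 x.2) hY₀
          (hP.prodMk hR).aemeasurable hY₀N' (fun k => by unfold condPGF; fun_prop)
          fun k hk => integrable_condPGF hP hR hPR_Icc hz hk
    _ = _ := (integral_pow_mul_pgf_eq_sum hP hR hPR_Icc (hPR.mono fun _ h => h.1.1) hY₀ hY₀N' hz).symm
end
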